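/- arXiv:2302.13287 — 10 statements merged into one kernel-verified Lean document; each statement's English description precedes it below -/
import Mathlib

section
/- There exists a constant C > 0 such that for all real numbers ρ, δ with 0 < δ ≤ 1 and δ < ρ, and all integers i, j ∈ ℤ, one has both ∑_{k∈ℤ} exp(−ρ(|i+k| + |k+j|)) ≤ C δ^{−1} exp(−(ρ−δ)|i−j|) and ∑_{k∈ℤ} exp(−ρ(|i−k| + |k+j|)) ≤ C δ^{−1} exp(−(ρ−δ)|i+j|). -/
/-!
Since `|i + k| + |k + j|` dominates both `|i - j|` and `|k + j|`, splitting `ρ = (ρ - δ) + δ`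
bounds the `k`-th term by `exp (-(ρ - δ) |i - j|) * exp (-δ |k + j|)`. The two-sided geometric
series `∑ₖ exp (-δ |k|) = (1 + e^{-δ}) / (1 - e^{-δ})` is at most `2 / δ + 1` because
`e^δ ≥ 1 + δ`. The second estimate is the first one applied to `-i`.
-/

open Real

theorem hasSum_exp_neg_mul_abs_int {δ : ℝ} (hδ : 0 < δ) :
    HasSum (fun k : ℤ => exp (-δ * |(k : ℝ)|)) ((1 + exp (-δ)) / (1 - exp (-δ))) := by
  have hr1 : exp (-δ) < 1 := exp_lt_one_iff.mpr (neg_lt_zero.mpr hδ)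
  have hpow (n : ℕ) : exp (-δ * n) = exp (-δ) ^ n := by rw [mul_comm, exp_nat_mul]
  have hgeom := hasSum_geometric_of_lt_one (exp_pos _).le hr1
  have hsum := HasSum.of_nat_of_neg_add_one (f := fun k : ℤ => exp (-δ * |(k : ℝ)|))
    (hgeom.congr_fun fun n => by rw [← hpow]; simp)
    ((hgeom.mul_left (exp (-δ))).congr_fun fun n => by
      rw [← pow_succ', ← hpow]; push_cast; rw [abs_neg, abs_of_nonneg (by positivity)])
  convert hsum using 1
  field_simp [(sub_pos.mpr hr1).ne']

theorem hasSum_exp_neg_mul_abs_int_add {δ : ℝ} (hδ : 0 < δ) (j : ℤ) :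
    HasSum (fun k : ℤ => exp (-δ * |(k : ℝ) + j|)) ((1 + exp (-δ)) / (1 - exp (-δ))) := by
  rw [← (Equiv.addRight j).symm.hasSum_iff]
  simpa [Function.comp_def] using hasSum_exp_neg_mul_abs_int hδ

theorem one_add_exp_neg_div_one_sub_exp_neg_le {δ : ℝ} (hδ : 0 < δ) :
    (1 + exp (-δ)) / (1 - exp (-δ)) ≤ 2 / δ + 1 := by
  have hr1 : exp (-δ) < 1 := exp_lt_one_iff.mpr (neg_lt_zero.mpr hδ)
  have hr : exp (-δ) * (1 + δ) ≤ 1 := by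
    calc exp (-δ) * (1 + δ) ≤ exp (-δ) * exp δ := by
          gcongr; linarith [add_one_le_exp δ]
      _ = 1 := by rw [← exp_add, neg_add_cancel, exp_zero]
  rw [div_add_one hδ.ne', div_le_div_iff₀ (sub_pos.mpr hr1) hδ]
  nlinarith

theorem exp_neg_mul_le_exp_mul_exp {ρ δ D x F : ℝ} (hδ : 0 ≤ δ) (hδρ : δ ≤ ρ)
    (hD : D ≤ F) (hx : x ≤ F) :
    exp (-ρ * F) ≤ exp (-(ρ - δ) * D) * exp (-δ * x) := by
  rw [← exp_add, exp_le_exp]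
  nlinarith [mul_le_mul_of_nonneg_left hD (sub_nonneg.mpr hδρ), mul_le_mul_of_nonneg_left hx hδ]

theorem summable_and_tsum_exp_neg_mul_abs_add_abs_le {ρ δ : ℝ} (hδ : 0 < δ) (hδρ : δ ≤ ρ)
    (i j : ℤ) :
    Summable (fun k : ℤ => exp (-ρ * (|(i : ℝ) + k| + |(k : ℝ) + j|))) ∧
      ∑' k : ℤ, exp (-ρ * (|(i : ℝ) + k| + |(k : ℝ) + j|)) ≤
        (2 / δ + 1) * exp (-(ρ - δ) * |(i : ℝ) - j|) := by
  have hdom := (hasSum_exp_neg_mul_abs_int_add hδ j).mul_left (exp (-(ρ - δ) * |(i : ℝ) - j|))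
  have hle (k : ℤ) : exp (-ρ * (|(i : ℝ) + k| + |(k : ℝ) + j|)) ≤
      exp (-(ρ - δ) * |(i : ℝ) - j|) * exp (-δ * |(k : ℝ) + j|) := by
    refine exp_neg_mul_le_exp_mul_exp hδ.le hδρ ?_ (le_add_of_nonneg_left (abs_nonneg _))
    calc |(i : ℝ) - j| = |((i : ℝ) + k) - (k + j)| := by ring_nf
      _ ≤ |(i : ℝ) + k| + |(k : ℝ) + j| := abs_sub _ _
  have hsum := hdom.summable.of_nonneg_of_le (fun _ => (exp_pos _).le) hle
  refine ⟨hsum, (hasSum_le hle hsum.hasSum hdom).trans ?_⟩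
  rw [mul_comm]
  exact mul_le_mul_of_nonneg_right (one_add_exp_neg_div_one_sub_exp_neg_le hδ) (exp_pos _).le

/-- Hankel-type exponential convolution estimates with loss `δ` in the decay rate:
there is `C > 0` such that for all `0 < δ ≤ 1`, `δ < ρ`, and all `i j : ℤ`,
`∑_{k ∈ ℤ} exp(-ρ(|i+k| + |k+j|)) ≤ C δ⁻¹ exp(-(ρ-δ)|i-j|)` and
`∑_{k ∈ ℤ} exp(-ρ(|i-k| + |k+j|)) ≤ C δ⁻¹ exp(-(ρ-δ)|i+j|)`. -/
theorem exp_convolution_hankel_sum_le :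
    ∃ C : ℝ, 0 < C ∧
      ∀ ρ δ : ℝ, 0 < δ → δ ≤ 1 → δ < ρ → ∀ i j : ℤ,
        (Summable (fun k : ℤ => Real.exp (-ρ * (|(i : ℝ) + (k : ℝ)| + |(k : ℝ) + (j : ℝ)|))) ∧
          (∑' k : ℤ, Real.exp (-ρ * (|(i : ℝ) + (k : ℝ)| + |(k : ℝ) + (j : ℝ)|))) ≤
            C * δ⁻¹ * Real.exp (-(ρ - δ) * |(i : ℝ) - (j : ℝ)|)) ∧
        (Summable (fun k : ℤ => Real.exp (-ρ * (|(i : ℝ) - (k : ℝ)| + |(k : ℝ) + (j : ℝ)|))) ∧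
          (∑' k : ℤ, Real.exp (-ρ * (|(i : ℝ) - (k : ℝ)| + |(k : ℝ) + (j : ℝ)|))) ≤
            C * δ⁻¹ * Real.exp (-(ρ - δ) * |(i : ℝ) + (j : ℝ)|)) := by
  refine ⟨3, by norm_num, fun ρ δ hδ hδ1 hδρ i j => ?_⟩
  have hC : 2 / δ + 1 ≤ 3 * δ⁻¹ := by
    rw [div_add_one hδ.ne', ← div_eq_mul_inv]; gcongr; linarith
  have hweaken {S D : ℝ} (h : S ≤ (2 / δ + 1) * exp (-(ρ - δ) * D)) :
      S ≤ 3 * δ⁻¹ * exp (-(ρ - δ) * D) :=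
    h.trans (mul_le_mul_of_nonneg_right hC (exp_pos _).le)
  obtain ⟨hsum₁, hle₁⟩ := summable_and_tsum_exp_neg_mul_abs_add_abs_le hδ hδρ.le i j
  obtain ⟨hsum₂, hle₂⟩ := summable_and_tsum_exp_neg_mul_abs_add_abs_le hδ hδρ.le (-i) j
  have hneg_add (x : ℝ) : |-(i : ℝ) + x| = |(i : ℝ) - x| := by rw [← abs_neg]; ring_nf
  have hneg_sub : |-(i : ℝ) - j| = |(i : ℝ) + j| := by rw [← abs_neg]; ring_nf
  simp only [Int.cast_neg, hneg_add, hneg_sub] at hsum₂ hle₂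
  exact ⟨⟨hsum₁, hweaken hle₁⟩, ⟨hsum₂, hweaken hle₂⟩⟩
end

section
/- There exists a constant C > 0 with the following property. Let ρ > 0, 0 < δ ≤ 1 with δ < ρ, and let M_A, M_B ≥ 0. Let A, B assign to each pair (i,j) ∈ ℤ × ℤ a 2×2 complex matrix, and assume the entrywise bounds: |A(i,j)_{11}|, |A(i,j)_{22}| ≤ M_A e^{−ρ|i−j|} and |A(i,j)_{12}|, |A(i,j)_{21}| ≤ M_A e^{−ρ|i+j|} for all i, j, and the analogous bounds for B with constant M_B. Then for every (i,j) the matrix series (AB)(i,j) := ∑_{k∈ℤ} A(i,k)·B(k,j) converges absolutely (entrywise), and its sum satisfies |(AB)(i,j)_{11}|, |(AB)(i,j)_{22}| ≤ C δ^{−1} M_A M_B e^{−(ρ−δ)|i−j|} and |(AB)(i,j)_{12}|, |(AB)(i,j)_{21}| ≤ C δ^{−1} M_A M_B e^{−(ρ−δ)|i+j|}. -/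
open Real

/-- Geometric summation over ℤ: ∑ exp(-δ|k|) ≤ 4/δ for 0 < δ ≤ 1. -/
lemma expZ_hasSum (δ : ℝ) (hδ : 0 < δ) :
    HasSum (fun k : ℤ => Real.exp (-δ * |(k : ℝ)|))
      ((1 - Real.exp (-δ))⁻¹ + Real.exp (-δ) * (1 - Real.exp (-δ))⁻¹) := by
  set r := Real.exp (-δ) with hr
  have hr0 : 0 ≤ r := (Real.exp_pos _).le
  have hr1 : r < 1 := Real.exp_lt_one_iff.mpr (by linarith)
  have hf : HasSum (fun n : ℕ => r ^ n) (1 - r)⁻¹ := hasSum_geometric_of_lt_one hr0 hr1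
  have hg : HasSum (fun n : ℕ => r * r ^ n) (r * (1 - r)⁻¹) := hf.mul_left r
  have := hf.int_rec hg
  convert this using 1
  funext k
  cases k with
  | ofNat n =>
    show Real.exp (-δ * |((n : ℤ) : ℝ)|) = r ^ n
    push_cast
    rw [abs_of_nonneg (by positivity), hr, ← Real.exp_nat_mul]
    congr 1
    ring
  | negSucc n =>
    show Real.exp (-δ * |((Int.negSucc n : ℤ) : ℝ)|) = r * r ^ n
    have h1 : |((Int.negSucc n : ℤ) : ℝ)| = (n : ℝ) + 1 := by
      rw [Int.cast_negSucc, abs_neg, abs_of_nonneg (by positivity)]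
      push_cast
      ring
    rw [h1, hr, ← Real.exp_nat_mul, ← Real.exp_add]
    congr 1
    ring

lemma expZ_shift (δ : ℝ) (hδ : 0 < δ) (hδ1 : δ ≤ 1) (m : ℤ) :
    Summable (fun k : ℤ => Real.exp (-δ * |(k : ℝ) - (m : ℝ)|)) ∧
      (∑' k : ℤ, Real.exp (-δ * |(k : ℝ) - (m : ℝ)|)) ≤ 4 / δ := by
  have h0 := expZ_hasSum δ hδ
  have he : (fun k : ℤ => Real.exp (-δ * |(k : ℝ) - (m : ℝ)|)) =
      (fun k : ℤ => Real.exp (-δ * |(k : ℝ)|)) ∘ (Equiv.subRight m) := by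
    funext k
    simp only [Function.comp, Equiv.subRight_apply]
    push_cast
    ring_nf
  have hsum : HasSum (fun k : ℤ => Real.exp (-δ * |(k : ℝ) - (m : ℝ)|))
      ((1 - Real.exp (-δ))⁻¹ + Real.exp (-δ) * (1 - Real.exp (-δ))⁻¹) := by
    rw [he]
    exact (Equiv.subRight m).hasSum_iff.mpr h0
  refine ⟨hsum.summable, ?_⟩
  rw [hsum.tsum_eq]
  set r := Real.exp (-δ) with hr
  have hr0 : 0 < r := Real.exp_pos _
  have hr1 : r < 1 := Real.exp_lt_one_iff.mpr (by linarith)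
  have h2 : (1:ℝ) + δ ≤ Real.exp δ := by
    have := Real.add_one_le_exp δ
    linarith
  have h3 : r ≤ (1 + δ)⁻¹ := by
    rw [hr, Real.exp_neg]
    exact inv_anti₀ (by linarith) h2
  have h4 : (1 + δ)⁻¹ ≤ 1 - δ / 2 := by
    rw [inv_eq_one_div, div_le_iff₀ (by linarith : (0:ℝ) < 1 + δ)]
    nlinarith
  have hbound : r ≤ 1 - δ / 2 := h3.trans h4
  have hpos : 0 < 1 - r := by linarith
  have hinv : (1 - r)⁻¹ ≤ 2 / δ := by
    have := inv_anti₀ (by positivity : (0:ℝ) < δ / 2) (by linarith : δ / 2 ≤ 1 - r)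
    rwa [inv_div] at this
  have hinv0 : (0:ℝ) ≤ (1 - r)⁻¹ := by positivity
  have hfin : (1 - r)⁻¹ + r * (1 - r)⁻¹ ≤ 2 / δ + 2 / δ :=
    add_le_add hinv ((mul_le_of_le_one_left hinv0 hr1.le).trans hinv)
  have : (2:ℝ) / δ + 2 / δ = 4 / δ := by ring
  linarith

/-- Core estimate: sum over k of exp(-ρ|k-m|)·exp(-ρ v k), with |k-m| + v k ≥ T. -/
lemma core_sum (ρ δ : ℝ) (hδ : 0 < δ) (hδ1 : δ ≤ 1) (hδρ : δ ≤ ρ)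
    (m : ℤ) (T : ℝ) (v : ℤ → ℝ) (hv : ∀ k, 0 ≤ v k)
    (hT : ∀ k : ℤ, T ≤ |(k : ℝ) - (m : ℝ)| + v k) :
    Summable (fun k : ℤ => Real.exp (-ρ * |(k : ℝ) - (m : ℝ)|) * Real.exp (-ρ * v k)) ∧
      (∑' k : ℤ, Real.exp (-ρ * |(k : ℝ) - (m : ℝ)|) * Real.exp (-ρ * v k)) ≤
        Real.exp (-(ρ - δ) * T) * (4 / δ) := by
  obtain ⟨hS, hB⟩ := expZ_shift δ hδ hδ1 m
  have key : ∀ k : ℤ, Real.exp (-ρ * |(k : ℝ) - (m : ℝ)|) * Real.exp (-ρ * v k) ≤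
      Real.exp (-(ρ - δ) * T) * Real.exp (-δ * |(k : ℝ) - (m : ℝ)|) := by
    intro k
    rw [← Real.exp_add, ← Real.exp_add]
    apply Real.exp_le_exp.mpr
    have h1 := hT k
    have h2 := hv k
    have h3 : (0:ℝ) ≤ |(k : ℝ) - (m : ℝ)| := abs_nonneg _
    nlinarith [mul_le_mul_of_nonneg_left h1 (by linarith : (0:ℝ) ≤ ρ - δ)]
  have hpos : ∀ k : ℤ, 0 ≤ Real.exp (-ρ * |(k : ℝ) - (m : ℝ)|) * Real.exp (-ρ * v k) :=
    fun k => by positivity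
  have hSum2 : Summable (fun k : ℤ =>
      Real.exp (-(ρ - δ) * T) * Real.exp (-δ * |(k : ℝ) - (m : ℝ)|)) := hS.mul_left _
  have hS1 : Summable (fun k : ℤ =>
      Real.exp (-ρ * |(k : ℝ) - (m : ℝ)|) * Real.exp (-ρ * v k)) :=
    Summable.of_nonneg_of_le hpos key hSum2
  refine ⟨hS1, ?_⟩
  calc (∑' k : ℤ, Real.exp (-ρ * |(k : ℝ) - (m : ℝ)|) * Real.exp (-ρ * v k))
      ≤ ∑' k : ℤ, Real.exp (-(ρ - δ) * T) * Real.exp (-δ * |(k : ℝ) - (m : ℝ)|) :=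
        Summable.tsum_le_tsum key hS1 hSum2
    _ = Real.exp (-(ρ - δ) * T) * ∑' k : ℤ, Real.exp (-δ * |(k : ℝ) - (m : ℝ)|) :=
        tsum_mul_left
    _ ≤ Real.exp (-(ρ - δ) * T) * (4 / δ) := by
        apply mul_le_mul_of_nonneg_left hB (Real.exp_pos _).le

/-- One entry of the block product: two paths, each controlled by `core_sum`. -/
lemma entry_bound (ρ δ MA MB : ℝ) (hδ : 0 < δ) (hδ1 : δ ≤ 1) (hδρ : δ ≤ ρ)
    (hMA : 0 ≤ MA) (hMB : 0 ≤ MB) (T : ℝ)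
    (f₀ g₀ f₁ g₁ : ℤ → ℂ) (m₀ m₁ : ℤ) (v₀ v₁ : ℤ → ℝ)
    (hv₀ : ∀ k, 0 ≤ v₀ k) (hv₁ : ∀ k, 0 ≤ v₁ k)
    (hT₀ : ∀ k : ℤ, T ≤ |(k : ℝ) - (m₀ : ℝ)| + v₀ k)
    (hT₁ : ∀ k : ℤ, T ≤ |(k : ℝ) - (m₁ : ℝ)| + v₁ k)
    (hf₀ : ∀ k : ℤ, ‖f₀ k‖ ≤ MA * Real.exp (-ρ * |(k : ℝ) - (m₀ : ℝ)|))
    (hg₀ : ∀ k : ℤ, ‖g₀ k‖ ≤ MB * Real.exp (-ρ * v₀ k))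
    (hf₁ : ∀ k : ℤ, ‖f₁ k‖ ≤ MA * Real.exp (-ρ * |(k : ℝ) - (m₁ : ℝ)|))
    (hg₁ : ∀ k : ℤ, ‖g₁ k‖ ≤ MB * Real.exp (-ρ * v₁ k)) :
    Summable (fun k : ℤ => ‖f₀ k * g₀ k + f₁ k * g₁ k‖) ∧
      ‖∑' k : ℤ, (f₀ k * g₀ k + f₁ k * g₁ k)‖ ≤
        8 * δ⁻¹ * MA * MB * Real.exp (-(ρ - δ) * T) := by
  set E₀ : ℤ → ℝ := fun k => Real.exp (-ρ * |(k : ℝ) - (m₀ : ℝ)|) * Real.exp (-ρ * v₀ k)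
  set E₁ : ℤ → ℝ := fun k => Real.exp (-ρ * |(k : ℝ) - (m₁ : ℝ)|) * Real.exp (-ρ * v₁ k)
  obtain ⟨hS₀, hB₀⟩ := core_sum ρ δ hδ hδ1 hδρ m₀ T v₀ hv₀ hT₀
  obtain ⟨hS₁, hB₁⟩ := core_sum ρ δ hδ hδ1 hδρ m₁ T v₁ hv₁ hT₁
  have hterm : ∀ k : ℤ, ‖f₀ k * g₀ k + f₁ k * g₁ k‖ ≤ MA * MB * E₀ k + MA * MB * E₁ k := by
    intro k
    have h0 : ‖f₀ k * g₀ k‖ ≤ MA * MB * E₀ k := by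
      rw [norm_mul]
      calc ‖f₀ k‖ * ‖g₀ k‖ ≤ (MA * Real.exp (-ρ * |(k : ℝ) - (m₀ : ℝ)|)) *
            (MB * Real.exp (-ρ * v₀ k)) :=
          mul_le_mul (hf₀ k) (hg₀ k) (norm_nonneg _) (by positivity)
        _ = MA * MB * E₀ k := by simp only [E₀]; ring
    have h1 : ‖f₁ k * g₁ k‖ ≤ MA * MB * E₁ k := by
      rw [norm_mul]
      calc ‖f₁ k‖ * ‖g₁ k‖ ≤ (MA * Real.exp (-ρ * |(k : ℝ) - (m₁ : ℝ)|)) *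
            (MB * Real.exp (-ρ * v₁ k)) :=
          mul_le_mul (hf₁ k) (hg₁ k) (norm_nonneg _) (by positivity)
        _ = MA * MB * E₁ k := by simp only [E₁]; ring
    calc ‖f₀ k * g₀ k + f₁ k * g₁ k‖ ≤ ‖f₀ k * g₀ k‖ + ‖f₁ k * g₁ k‖ := norm_add_le _ _
      _ ≤ MA * MB * E₀ k + MA * MB * E₁ k := add_le_add h0 h1
  have hSb : Summable (fun k : ℤ => MA * MB * E₀ k + MA * MB * E₁ k) :=
    (hS₀.mul_left _).add (hS₁.mul_left _)
  have hSn : Summable (fun k : ℤ => ‖f₀ k * g₀ k + f₁ k * g₁ k‖) :=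
    Summable.of_nonneg_of_le (fun k => norm_nonneg _) hterm hSb
  refine ⟨hSn, ?_⟩
  calc ‖∑' k : ℤ, (f₀ k * g₀ k + f₁ k * g₁ k)‖
      ≤ ∑' k : ℤ, ‖f₀ k * g₀ k + f₁ k * g₁ k‖ := norm_tsum_le_tsum_norm hSn
    _ ≤ ∑' k : ℤ, (MA * MB * E₀ k + MA * MB * E₁ k) := Summable.tsum_le_tsum hterm hSn hSb
    _ = MA * MB * (∑' k, E₀ k) + MA * MB * (∑' k, E₁ k) := by
        rw [Summable.tsum_add (hS₀.mul_left _) (hS₁.mul_left _), tsum_mul_left, tsum_mul_left]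
    _ ≤ MA * MB * (Real.exp (-(ρ - δ) * T) * (4 / δ)) +
          MA * MB * (Real.exp (-(ρ - δ) * T) * (4 / δ)) :=
        add_le_add (mul_le_mul_of_nonneg_left hB₀ (by positivity))
          (mul_le_mul_of_nonneg_left hB₁ (by positivity))
    _ = 8 * δ⁻¹ * MA * MB * Real.exp (-(ρ - δ) * T) := by
        rw [div_eq_mul_inv]; ring

theorem matrix_toplitz_product_decay' :
    ∃ C : ℝ, 0 < C ∧
      ∀ (ρ δ MA MB : ℝ), 0 < δ → δ ≤ 1 → δ < ρ → 0 ≤ MA → 0 ≤ MB →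
      ∀ (A B : ℤ → ℤ → Fin 2 → Fin 2 → ℂ),
      (∀ i j : ℤ,
        ‖A i j 0 0‖ ≤ MA * Real.exp (-ρ * |(i : ℝ) - (j : ℝ)|) ∧
        ‖A i j 1 1‖ ≤ MA * Real.exp (-ρ * |(i : ℝ) - (j : ℝ)|) ∧
        ‖A i j 0 1‖ ≤ MA * Real.exp (-ρ * |(i : ℝ) + (j : ℝ)|) ∧
        ‖A i j 1 0‖ ≤ MA * Real.exp (-ρ * |(i : ℝ) + (j : ℝ)|)) →
      (∀ i j : ℤ,
        ‖B i j 0 0‖ ≤ MB * Real.exp (-ρ * |(i : ℝ) - (j : ℝ)|) ∧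
        ‖B i j 1 1‖ ≤ MB * Real.exp (-ρ * |(i : ℝ) - (j : ℝ)|) ∧
        ‖B i j 0 1‖ ≤ MB * Real.exp (-ρ * |(i : ℝ) + (j : ℝ)|) ∧
        ‖B i j 1 0‖ ≤ MB * Real.exp (-ρ * |(i : ℝ) + (j : ℝ)|)) →
      ∀ i j : ℤ,
        (∀ a b : Fin 2,
          Summable (fun k : ℤ => ‖∑ c : Fin 2, A i k a c * B k j c b‖)) ∧
        ‖∑' k : ℤ, ∑ c : Fin 2, A i k 0 c * B k j c 0‖ ≤
          C * δ⁻¹ * MA * MB * Real.exp (-(ρ - δ) * |(i : ℝ) - (j : ℝ)|) ∧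
        ‖∑' k : ℤ, ∑ c : Fin 2, A i k 1 c * B k j c 1‖ ≤
          C * δ⁻¹ * MA * MB * Real.exp (-(ρ - δ) * |(i : ℝ) - (j : ℝ)|) ∧
        ‖∑' k : ℤ, ∑ c : Fin 2, A i k 0 c * B k j c 1‖ ≤
          C * δ⁻¹ * MA * MB * Real.exp (-(ρ - δ) * |(i : ℝ) + (j : ℝ)|) ∧
        ‖∑' k : ℤ, ∑ c : Fin 2, A i k 1 c * B k j c 0‖ ≤
          C * δ⁻¹ * MA * MB * Real.exp (-(ρ - δ) * |(i : ℝ) + (j : ℝ)|) := by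
  refine ⟨8, by norm_num, ?_⟩
  intro ρ δ MA MB hδ hδ1 hδρ hMA hMB A B hA hB i j
  have hδρ' : δ ≤ ρ := hδρ.le
  have csub : ∀ k : ℤ, |(k : ℝ) - ((i : ℤ) : ℝ)| = |(i : ℝ) - (k : ℝ)| :=
    fun k => abs_sub_comm _ _
  have cneg : ∀ k : ℤ, |(k : ℝ) - (((-i) : ℤ) : ℝ)| = |(i : ℝ) + (k : ℝ)| := by
    intro k; push_cast; rw [sub_neg_eq_add, add_comm]
  -- entry (0,0)
  have E00 := entry_bound ρ δ MA MB hδ hδ1 hδρ' hMA hMB (|(i : ℝ) - (j : ℝ)|)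
    (fun k => A i k 0 0) (fun k => B k j 0 0) (fun k => A i k 0 1) (fun k => B k j 1 0)
    i (-i) (fun k => |(k : ℝ) - (j : ℝ)|) (fun k => |(k : ℝ) + (j : ℝ)|)
    (fun k => abs_nonneg _) (fun k => abs_nonneg _)
    (fun k => by rw [csub k]; exact (abs_sub_le _ (k : ℝ) _).trans_eq (by rw [abs_sub_comm]))
    (fun k => by
      rw [cneg k]
      calc |(i : ℝ) - (j : ℝ)| = |((i : ℝ) + k) - ((k : ℝ) + j)| := by ring_nf
        _ ≤ |(i : ℝ) + k| + |(k : ℝ) + j| := abs_sub _ _)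
    (fun k => by rw [csub k]; exact (hA i k).1)
    (fun k => (hB k j).1)
    (fun k => by rw [cneg k]; exact (hA i k).2.2.1)
    (fun k => (hB k j).2.2.2)
  -- entry (1,1)
  have E11 := entry_bound ρ δ MA MB hδ hδ1 hδρ' hMA hMB (|(i : ℝ) - (j : ℝ)|)
    (fun k => A i k 1 0) (fun k => B k j 0 1) (fun k => A i k 1 1) (fun k => B k j 1 1)
    (-i) i (fun k => |(k : ℝ) + (j : ℝ)|) (fun k => |(k : ℝ) - (j : ℝ)|)
    (fun k => abs_nonneg _) (fun k => abs_nonneg _)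
    (fun k => by
      rw [cneg k]
      calc |(i : ℝ) - (j : ℝ)| = |((i : ℝ) + k) - ((k : ℝ) + j)| := by ring_nf
        _ ≤ |(i : ℝ) + k| + |(k : ℝ) + j| := abs_sub _ _)
    (fun k => by rw [csub k]; exact (abs_sub_le _ (k : ℝ) _).trans_eq (by rw [abs_sub_comm]))
    (fun k => by rw [cneg k]; exact (hA i k).2.2.2)
    (fun k => (hB k j).2.2.1)
    (fun k => by rw [csub k]; exact (hA i k).2.1)
    (fun k => (hB k j).2.1)
  -- entry (0,1)
  have E01 := entry_bound ρ δ MA MB hδ hδ1 hδρ' hMA hMB (|(i : ℝ) + (j : ℝ)|)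
    (fun k => A i k 0 0) (fun k => B k j 0 1) (fun k => A i k 0 1) (fun k => B k j 1 1)
    i (-i) (fun k => |(k : ℝ) + (j : ℝ)|) (fun k => |(k : ℝ) - (j : ℝ)|)
    (fun k => abs_nonneg _) (fun k => abs_nonneg _)
    (fun k => by
      rw [csub k]
      calc |(i : ℝ) + (j : ℝ)| = |((i : ℝ) - k) + ((k : ℝ) + j)| := by ring_nf
        _ ≤ |(i : ℝ) - k| + |(k : ℝ) + j| := abs_add_le _ _)
    (fun k => by
      rw [cneg k]
      calc |(i : ℝ) + (j : ℝ)| = |((i : ℝ) + k) - ((k : ℝ) - j)| := by ring_nf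
        _ ≤ |(i : ℝ) + k| + |(k : ℝ) - j| := abs_sub _ _)
    (fun k => by rw [csub k]; exact (hA i k).1)
    (fun k => (hB k j).2.2.1)
    (fun k => by rw [cneg k]; exact (hA i k).2.2.1)
    (fun k => (hB k j).2.1)
  -- entry (1,0)
  have E10 := entry_bound ρ δ MA MB hδ hδ1 hδρ' hMA hMB (|(i : ℝ) + (j : ℝ)|)
    (fun k => A i k 1 0) (fun k => B k j 0 0) (fun k => A i k 1 1) (fun k => B k j 1 0)
    (-i) i (fun k => |(k : ℝ) - (j : ℝ)|) (fun k => |(k : ℝ) + (j : ℝ)|)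
    (fun k => abs_nonneg _) (fun k => abs_nonneg _)
    (fun k => by
      rw [cneg k]
      calc |(i : ℝ) + (j : ℝ)| = |((i : ℝ) + k) - ((k : ℝ) - j)| := by ring_nf
        _ ≤ |(i : ℝ) + k| + |(k : ℝ) - j| := abs_sub _ _)
    (fun k => by
      rw [csub k]
      calc |(i : ℝ) + (j : ℝ)| = |((i : ℝ) - k) + ((k : ℝ) + j)| := by ring_nf
        _ ≤ |(i : ℝ) - k| + |(k : ℝ) + j| := abs_add_le _ _)
    (fun k => by rw [cneg k]; exact (hA i k).2.2.2)
    (fun k => (hB k j).1)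
    (fun k => by rw [csub k]; exact (hA i k).2.1)
    (fun k => (hB k j).2.2.2)
  refine ⟨?_, ?_, ?_, ?_, ?_⟩
  · intro a b
    fin_cases a <;> fin_cases b <;> simp only [Fin.sum_univ_two] <;>
      first
        | exact E00.1
        | exact E01.1
        | exact E10.1
        | exact E11.1
  · simpa only [Fin.sum_univ_two] using E00.2
  · simpa only [Fin.sum_univ_two] using E11.2
  · simpa only [Fin.sum_univ_two] using E01.2
  · simpa only [Fin.sum_univ_two] using E10.2


/-- Product of two bilateral infinite matrices of 2×2 complex blocks with exponential
off-diagonal decay (Töplitz–Lipschitz property (T1′)): the blockwise product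
`(AB)(i,j) = ∑_{k∈ℤ} A(i,k) B(k,j)` converges absolutely entrywise and has exponential
off-diagonal decay of rate `ρ - δ`, with constant `C δ⁻¹ M_A M_B`. -/
theorem matrix_toplitz_product_decay :
    ∃ C : ℝ, 0 < C ∧
      ∀ (ρ δ MA MB : ℝ), 0 < δ → δ ≤ 1 → δ < ρ → 0 ≤ MA → 0 ≤ MB →
      ∀ (A B : ℤ → ℤ → Fin 2 → Fin 2 → ℂ),
      (∀ i j : ℤ,
        ‖A i j 0 0‖ ≤ MA * Real.exp (-ρ * |(i : ℝ) - (j : ℝ)|) ∧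
        ‖A i j 1 1‖ ≤ MA * Real.exp (-ρ * |(i : ℝ) - (j : ℝ)|) ∧
        ‖A i j 0 1‖ ≤ MA * Real.exp (-ρ * |(i : ℝ) + (j : ℝ)|) ∧
        ‖A i j 1 0‖ ≤ MA * Real.exp (-ρ * |(i : ℝ) + (j : ℝ)|)) →
      (∀ i j : ℤ,
        ‖B i j 0 0‖ ≤ MB * Real.exp (-ρ * |(i : ℝ) - (j : ℝ)|) ∧
        ‖B i j 1 1‖ ≤ MB * Real.exp (-ρ * |(i : ℝ) - (j : ℝ)|) ∧
        ‖B i j 0 1‖ ≤ MB * Real.exp (-ρ * |(i : ℝ) + (j : ℝ)|) ∧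
        ‖B i j 1 0‖ ≤ MB * Real.exp (-ρ * |(i : ℝ) + (j : ℝ)|)) →
      ∀ i j : ℤ,
        (∀ a b : Fin 2,
          Summable (fun k : ℤ => ‖∑ c : Fin 2, A i k a c * B k j c b‖)) ∧
        ‖∑' k : ℤ, ∑ c : Fin 2, A i k 0 c * B k j c 0‖ ≤
          C * δ⁻¹ * MA * MB * Real.exp (-(ρ - δ) * |(i : ℝ) - (j : ℝ)|) ∧
        ‖∑' k : ℤ, ∑ c : Fin 2, A i k 1 c * B k j c 1‖ ≤
          C * δ⁻¹ * MA * MB * Real.exp (-(ρ - δ) * |(i : ℝ) - (j : ℝ)|) ∧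
        ‖∑' k : ℤ, ∑ c : Fin 2, A i k 0 c * B k j c 1‖ ≤
          C * δ⁻¹ * MA * MB * Real.exp (-(ρ - δ) * |(i : ℝ) + (j : ℝ)|) ∧
        ‖∑' k : ℤ, ∑ c : Fin 2, A i k 1 c * B k j c 0‖ ≤
          C * δ⁻¹ * MA * MB * Real.exp (-(ρ - δ) * |(i : ℝ) + (j : ℝ)|) := by
  exact matrix_toplitz_product_decay'
end

section
/- Let Δ : [0,∞) → [1,∞) be nondecreasing and such that t ↦ (log Δ(t))/t is nonincreasing on (0,∞). Put κ = 4/3, δ(t) = log((1+t)^2 Δ(t)^3), and Γ(s) = sup_{t ≥ 0} e^{δ(t) − s t} for s > 0. Let T > 0 and σ > 0 satisfy ∫_T^∞ δ(t)/t^2 dt ≤ σ · log κ. Define t_ν = κ^{ν+1} T and σ_ν = δ(t_ν)/t_ν for ν ≥ 0. Then: (1) the sequence (σ_ν)_{ν≥0} is positive and nonincreasing; (2) ∑_{ν≥0} σ_ν ≤ σ; (3) Γ(σ_ν) ≤ e^{σ_ν t_ν} for every ν; and (4) the infinite product ∏_{ν≥0} Γ(σ_ν)^{κ^{−(ν+1)}}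 is at most e^{σ T}. -/
/-!
Both `δ` and `t ↦ δ(t)/t` are monotone, the latter nonincreasing by concavity of `log (1 + t)`
and the hypothesis on `Δ`. On the block `(κ^ν T, κ^{ν+1} T]` the integrand `δ(t)/t²` is therefore
at least `σ_ν / t`, whose integral over the block is `σ_ν log κ`; summing the blocks gives
`log κ · ∑ σ_ν ≤ ∫_T^∞ δ(t)/t² dt ≤ σ log κ`. Splitting at `t = t_ν`, the same two monotonicities
give `δ(t) - σ_ν t ≤ δ(t_ν) = σ_ν t_ν` for all `t ≥ 0`, so `Γ(σ_ν) ≤ e^{σ_ν t_ν}`; raised to the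
power `κ^{-(ν+1)}` this is `e^{σ_ν T}`, and the product is at most `e^{T ∑ σ_ν} ≤ e^{σ T}`.
-/

open Real MeasureTheory Set
open scoped ENNReal

theorem antitoneOn_log_one_add_div : AntitoneOn (fun t => log (1 + t) / t) (Ioi 0) := by
  have hconc : ConcaveOn ℝ ((fun z => 1 + z) ⁻¹' Ioi 0) (log ∘ fun z => 1 + z) :=
    strictConcaveOn_log_Ioi.concaveOn.translate_right 1
  intro a (ha : 0 < a) b (hb : 0 < b) hab
  have h := hconc.antitoneOn_slope_gt (x := 0) (by norm_num)
    ⟨show 0 < 1 + a by linarith, ha⟩ ⟨show 0 < 1 + b by linarith, hb⟩ hab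
  simpa [slope_def_field] using h

section Slope

variable {g : ℝ → ℝ}

theorem sub_slope_mul_le (hmono : MonotoneOn g (Ici 0))
    (hanti : AntitoneOn (fun t => g t / t) (Ioi 0)) {t₀ t : ℝ} (ht₀ : 0 < t₀)
    (hg₀ : 0 ≤ g t₀) (ht : 0 ≤ t) : g t - g t₀ / t₀ * t ≤ g t₀ := by
  have hslope : 0 ≤ g t₀ / t₀ := div_nonneg hg₀ ht₀.le
  rcases le_or_gt t t₀ with hle | hlt
  · nlinarith [hmono ht ht₀.le hle]
  · have hgt : g t / t ≤ g t₀ / t₀ := hanti ht₀ (ht₀.trans hlt) hlt.le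
    nlinarith [(div_le_iff₀ (ht₀.trans hlt)).1 hgt]

theorem slope_mul_log_le_integral (hanti : AntitoneOn (fun t => g t / t) (Ioi 0))
    {a b : ℝ} (ha : 0 < a) (hab : a ≤ b)
    (hint : IntervalIntegrable (fun t => g t / t ^ 2) volume a b) :
    g b / b * log (b / a) ≤ ∫ t in a..b, g t / t ^ 2 := by
  have hb : 0 < b := ha.trans_le hab
  rw [← integral_inv_of_pos ha hb, ← intervalIntegral.integral_const_mul]
  refine intervalIntegral.integral_mono_on hab ?_ hint fun t ht => ?_
  · refine (intervalIntegral.intervalIntegrable_inv (fun t ht => ?_) continuousOn_id).const_mul _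
    rw [uIcc_of_le hab] at ht
    exact (ha.trans_le ht.1).ne'
  · have ht0 : 0 < t := ha.trans_le ht.1
    calc g b / b * t⁻¹ ≤ g t / t * t⁻¹ :=
          mul_le_mul_of_nonneg_right (hanti ht0 hb ht.2) (inv_nonneg.2 ht0.le)
      _ = g t / t ^ 2 := by field_simp

theorem sum_slope_geometric_mul_log_le (hanti : AntitoneOn (fun t => g t / t) (Ioi 0))
    {κ T : ℝ} (hκ : 1 < κ) (hT : 0 < T) (hint : IntegrableOn (fun t => g t / t ^ 2) (Ioi T))
    (N : ℕ) :
    (∑ ν ∈ Finset.range N, g (κ ^ (ν + 1) * T) / (κ ^ (ν + 1) * T)) * log κ ≤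
      ∫ t in T..κ ^ N * T, g t / t ^ 2 := by
  have hstep : ∀ ν : ℕ, κ ^ ν * T ≤ κ ^ (ν + 1) * T := fun ν => by
    gcongr
    exacts [hκ.le, ν.le_succ]
  have hII : ∀ ν : ℕ,
      IntervalIntegrable (fun t => g t / t ^ 2) volume (κ ^ ν * T) (κ ^ (ν + 1) * T) :=
    fun ν => (intervalIntegrable_iff_integrableOn_Ioc_of_le (hstep ν)).2 <|
      hint.mono_set fun t ht => (le_mul_of_one_le_left hT.le (one_le_pow₀ hκ.le)).trans_lt ht.1
  have hsum := intervalIntegral.sum_integral_adjacent_intervals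
    (a := fun ν : ℕ => κ ^ ν * T) (n := N) (fun ν _ => hII ν)
  simp only [pow_zero, one_mul] at hsum
  rw [← hsum, Finset.sum_mul]
  refine Finset.sum_le_sum fun ν _ => ?_
  have hratio : κ ^ (ν + 1) * T / (κ ^ ν * T) = κ := by
    field_simp
    ring
  simpa only [hratio] using slope_mul_log_le_integral hanti (by positivity) (hstep ν) (hII ν)

theorem sum_slope_geometric_le (hg : ∀ t, 0 < t → 0 ≤ g t)
    (hanti : AntitoneOn (fun t => g t / t) (Ioi 0)) {κ T σ : ℝ} (hκ : 1 < κ) (hT : 0 < T)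
    (hint : IntegrableOn (fun t => g t / t ^ 2) (Ioi T))
    (hσ : ∫ t in Ioi T, g t / t ^ 2 ≤ σ * log κ) (N : ℕ) :
    ∑ ν ∈ Finset.range N, g (κ ^ (ν + 1) * T) / (κ ^ (ν + 1) * T) ≤ σ := by
  refine le_of_mul_le_mul_right ?_ (log_pos hκ)
  calc _ ≤ ∫ t in T..κ ^ N * T, g t / t ^ 2 := sum_slope_geometric_mul_log_le hanti hκ hT hint N
    _ ≤ ∫ t in Ioi T, g t / t ^ 2 := by
        rw [intervalIntegral.integral_of_le (le_mul_of_one_le_left hT.le (one_le_pow₀ hκ.le))]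
        refine setIntegral_mono_set hint ?_ Ioc_subset_Ioi_self.eventuallyLE
        filter_upwards [ae_restrict_mem measurableSet_Ioi] with t ht
        exact div_nonneg (hg t (hT.trans ht)) (sq_nonneg t)
    _ ≤ σ * log κ := hσ

theorem iSup_ofReal_exp_sub_slope_mul_le (hmono : MonotoneOn g (Ici 0))
    (hanti : AntitoneOn (fun t => g t / t) (Ioi 0)) {t₀ : ℝ} (ht₀ : 0 < t₀) (hg₀ : 0 ≤ g t₀) :
    ⨆ (t : ℝ) (_ : 0 ≤ t), ENNReal.ofReal (exp (g t - g t₀ / t₀ * t)) ≤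
      ENNReal.ofReal (exp (g t₀)) :=
  iSup₂_le fun _ ht =>
    ENNReal.ofReal_le_ofReal (exp_le_exp.2 (sub_slope_mul_le hmono hanti ht₀ hg₀ ht))

end Slope

section LogWeight

variable {Δ : ℝ → ℝ}

theorem log_one_add_sq_mul_cube_pos (hΔ1 : ∀ t, 0 ≤ t → 1 ≤ Δ t) {t : ℝ} (ht : 0 < t) :
    0 < log ((1 + t) ^ 2 * Δ t ^ 3) :=
  log_pos (one_lt_mul_of_lt_of_le (by nlinarith) (one_le_pow₀ (hΔ1 t ht.le)))

theorem monotoneOn_log_one_add_sq_mul_cube (hΔ1 : ∀ t, 0 ≤ t → 1 ≤ Δ t)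
    (hΔmono : MonotoneOn Δ (Ici 0)) :
    MonotoneOn (fun t => log ((1 + t) ^ 2 * Δ t ^ 3)) (Ici 0) := by
  intro s hs t ht hst
  have hΔs : 0 < Δ s := one_pos.trans_le (hΔ1 s hs)
  have hs' : (0 : ℝ) ≤ s := hs
  dsimp only
  gcongr
  exact hΔmono hs ht hst

theorem antitoneOn_log_one_add_sq_mul_cube_div (hΔ1 : ∀ t, 0 ≤ t → 1 ≤ Δ t)
    (hΔdec : AntitoneOn (fun t => log (Δ t) / t) (Ioi 0)) :
    AntitoneOn (fun t => log ((1 + t) ^ 2 * Δ t ^ 3) / t) (Ioi 0) := by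
  have hsplit : ∀ t : ℝ, 0 < t →
      log ((1 + t) ^ 2 * Δ t ^ 3) / t = 2 * (log (1 + t) / t) + 3 * (log (Δ t) / t) := by
    intro t ht
    have hΔt : 0 < Δ t := one_pos.trans_le (hΔ1 t ht.le)
    rw [log_mul (by positivity) (by positivity), log_pow, log_pow]
    push_cast
    ring
  intro a ha b hb hab
  dsimp only
  rw [hsplit a ha, hsplit b hb]
  linarith [antitoneOn_log_one_add_div ha hb hab, hΔdec ha hb hab]

end LogWeight

theorem ENNReal.rpow_inv_le_ofReal_exp {x : ℝ≥0∞} {c y : ℝ} (hc : 0 < c)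
    (hx : x ≤ ENNReal.ofReal (exp (c * y))) : x ^ c⁻¹ ≤ ENNReal.ofReal (exp y) := by
  calc x ^ c⁻¹ ≤ ENNReal.ofReal (exp (c * y)) ^ c⁻¹ := ENNReal.rpow_le_rpow hx (inv_nonneg.2 hc.le)
    _ = ENNReal.ofReal (exp y) := by
      rw [ENNReal.ofReal_rpow_of_pos (exp_pos _), ← exp_mul, mul_comm c,
        mul_inv_cancel_right₀ hc.ne']

theorem ENNReal.prod_rpow_inv_le_ofReal_exp_sum {ι : Type*} {x : ι → ℝ≥0∞} {c y : ι → ℝ}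
    (hc : ∀ i, 0 < c i) (hx : ∀ i, x i ≤ ENNReal.ofReal (exp (c i * y i))) (s : Finset ι) :
    ∏ i ∈ s, x i ^ (c i)⁻¹ ≤ ENNReal.ofReal (exp (∑ i ∈ s, y i)) := by
  rw [exp_sum, ENNReal.ofReal_prod_of_nonneg fun i _ => (exp_pos _).le]
  exact Finset.prod_le_prod' fun i _ => ENNReal.rpow_inv_le_ofReal_exp (hc i) (hx i)

theorem xi_product_bound_general (Δ : ℝ → ℝ)
    (hΔ1 : ∀ t, 0 ≤ t → 1 ≤ Δ t)
    (hΔmono : MonotoneOn Δ (Set.Ici 0))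
    (hΔdec : AntitoneOn (fun t => Real.log (Δ t) / t) (Set.Ioi 0))
    (κ : ℝ) (hκ : κ = 4 / 3)
    (δf : ℝ → ℝ) (hδf : ∀ t, δf t = Real.log ((1 + t) ^ 2 * (Δ t) ^ 3))
    (Γ : ℝ → ℝ≥0∞)
    (hΓ : ∀ s : ℝ, Γ s =
      ⨆ (t : ℝ) (_ : 0 ≤ t), ENNReal.ofReal (Real.exp (δf t - s * t)))
    (T σ : ℝ) (hT : 0 < T)
    (hInt : IntegrableOn (fun t => δf t / t ^ 2) (Set.Ioi T))
    (hIntLe : (∫ t in Set.Ioi T, δf t / t ^ 2) ≤ σ * Real.log κ)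
    (ts σs : ℕ → ℝ)
    (hts : ∀ ν : ℕ, ts ν = κ ^ (ν + 1) * T)
    (hσs : ∀ ν : ℕ, σs ν = δf (ts ν) / ts ν) :
    (∀ ν : ℕ, 0 < σs ν) ∧
    Antitone σs ∧
    (Summable σs ∧ (∑' ν : ℕ, σs ν) ≤ σ) ∧
    (∀ ν : ℕ, Γ (σs ν) ≤ ENNReal.ofReal (Real.exp (σs ν * ts ν))) ∧
    (⨆ N : ℕ, ∏ ν ∈ Finset.range N, Γ (σs ν) ^ ((κ ^ (ν + 1))⁻¹ : ℝ)) ≤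
      ENNReal.ofReal (Real.exp (σ * T)) := by
  have hκ1 : (1 : ℝ) < κ := by norm_num [hκ]
  obtain rfl : δf = fun t => log ((1 + t) ^ 2 * Δ t ^ 3) := funext hδf
  have hδpos := fun t (ht : 0 < t) => log_one_add_sq_mul_cube_pos hΔ1 ht
  have hδmono := monotoneOn_log_one_add_sq_mul_cube hΔ1 hΔmono
  have hδanti := antitoneOn_log_one_add_sq_mul_cube_div hΔ1 hΔdec
  have htpos : ∀ ν, 0 < ts ν := fun ν => by rw [hts]; positivity
  have hσpos : ∀ ν, 0 < σs ν := fun ν => by rw [hσs]; exact div_pos (hδpos _ (htpos ν)) (htpos ν)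
  have hpartial : ∀ N, ∑ ν ∈ Finset.range N, σs ν ≤ σ := by
    simpa only [hσs, hts] using
      sum_slope_geometric_le (fun t ht => (hδpos t ht).le) hδanti hκ1 hT hInt hIntLe
  have hΓσ : ∀ ν, Γ (σs ν) ≤ ENNReal.ofReal (exp (σs ν * ts ν)) := by
    intro ν
    rw [hΓ, hσs, div_mul_cancel₀ _ (htpos ν).ne']
    exact iSup_ofReal_exp_sub_slope_mul_le hδmono hδanti (htpos ν) (hδpos _ (htpos ν)).le
  refine ⟨hσpos, antitone_nat_of_succ_le fun ν => ?_,
    ⟨summable_of_sum_range_le (fun ν => (hσpos ν).le) hpartial,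
      Real.tsum_le_of_sum_range_le (fun ν => (hσpos ν).le) hpartial⟩, hΓσ, iSup_le fun N => ?_⟩
  · rw [hσs, hσs]
    refine hδanti (htpos ν) (htpos (ν + 1)) ?_
    rw [hts, hts]
    gcongr
    exacts [hκ1.le, ν.le_succ]
  · calc _ ≤ ENNReal.ofReal (exp (∑ ν ∈ Finset.range N, σs ν * T)) := by
          refine ENNReal.prod_rpow_inv_le_ofReal_exp_sum (fun ν => by positivity) (fun ν => ?_) _
          rw [mul_left_comm, ← hts]
          exact hΓσ ν
      _ ≤ ENNReal.ofReal (exp (σ * T)) := by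
          rw [← Finset.sum_mul]
          gcongr
          exact hpartial N

/-- Appendix lemma bounding `Ξ(σ)`: for an approximation-type function `Δ`
(nondecreasing, values in `[1,∞)`, with `log Δ(t) / t` nonincreasing on `(0,∞)`),
`κ = 4/3`, `δf t = log((1+t)² Δ(t)³)` and `Γ s = sup_{t ≥ 0} e^{δf t - s t}`,
if `T, σ > 0` satisfy `∫_T^∞ δf(t)/t² dt ≤ σ log κ`, then with `t_ν = κ^{ν+1} T` and
`σ_ν = δf(t_ν)/t_ν`: the `σ_ν` are positive and nonincreasing, `∑ σ_ν ≤ σ`,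
`Γ(σ_ν) ≤ e^{σ_ν t_ν}`, and the infinite product
`∏_{ν≥0} Γ(σ_ν)^{κ^{-(ν+1)}}` (the supremum of its partial products) is at most `e^{σ T}`. -/
theorem xi_product_bound (Δ : ℝ → ℝ)
    (hΔ1 : ∀ t, 0 ≤ t → 1 ≤ Δ t)
    (hΔmono : MonotoneOn Δ (Set.Ici 0))
    (hΔdec : AntitoneOn (fun t => Real.log (Δ t) / t) (Set.Ioi 0))
    (κ : ℝ) (hκ : κ = 4 / 3)
    (δf : ℝ → ℝ) (hδf : ∀ t, δf t = Real.log ((1 + t) ^ 2 * (Δ t) ^ 3))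
    (Γ : ℝ → ℝ≥0∞)
    (hΓ : ∀ s : ℝ, Γ s =
      ⨆ (t : ℝ) (_ : 0 ≤ t), ENNReal.ofReal (Real.exp (δf t - s * t)))
    (T σ : ℝ) (hT : 0 < T) (hσ : 0 < σ)
    (hInt : IntegrableOn (fun t => δf t / t ^ 2) (Set.Ioi T))
    (hIntLe : (∫ t in Set.Ioi T, δf t / t ^ 2) ≤ σ * Real.log κ)
    (ts σs : ℕ → ℝ)
    (hts : ∀ ν : ℕ, ts ν = κ ^ (ν + 1) * T)
    (hσs : ∀ ν : ℕ, σs ν = δf (ts ν) / ts ν) :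
    (∀ ν : ℕ, 0 < σs ν) ∧
    Antitone σs ∧
    (Summable σs ∧ (∑' ν : ℕ, σs ν) ≤ σ) ∧
    (∀ ν : ℕ, Γ (σs ν) ≤ ENNReal.ofReal (Real.exp (σs ν * ts ν))) ∧
    (⨆ N : ℕ, ∏ ν ∈ Finset.range N, Γ (σs ν) ^ ((κ ^ (ν + 1))⁻¹ : ℝ)) ≤
      ENNReal.ofReal (Real.exp (σ * T)) :=
  xi_product_bound_general Δ hΔ1 hΔmono hΔdec κ hκ δf hδf Γ hΓ T σ hT hInt hIntLe ts σs hts hσs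
end

section
/- Let q ≥ 1 be an integer, β > 0, ε > 0, and let a ≤ b be real numbers. Let f : [a,b] → ℝ be q-times continuously differentiable on [a,b] and suppose |f^{(q)}(t)| ≥ β for all t ∈ [a,b]. Then the Lebesgue measure of the set {t ∈ [a,b] : |f(t)| ≤ ε} is at most 4 · (q! · ε / (2β))^{1/q}. -/
/-!
Let `E = {t ∈ [a, b] : |f t| ≤ ε}`, `r = |E|` and `F t = |E ∩ (-∞, t]|`. Since `F` is monotone,
`1`-Lipschitz and takes every value of `(0, r]` on `E`, every increasing `x ∈ (0, r]^{q+1}` is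
`F ∘ t` for increasing points `tᵢ ∈ E` with `|xᵢ - xⱼ| ≤ |tᵢ - tⱼ|`. For `L < r` let `x` be the
Chebyshev extremal nodes `uᵢ = cos (iπ/q)` rescaled to an interval of length `L`. Iterated
Rolle applied to `f` minus its interpolating polynomial gives
`f^{(q)}(ξ) = q! ∑ᵢ f(tᵢ) / ∏_{j≠i} (tᵢ - tⱼ)`, hence
`β ≤ q! ε ∑ᵢ ∏_{j≠i} |tᵢ - tⱼ|⁻¹ ≤ q! ε (2/L)^q ∑ᵢ ∏_{j≠i} |uᵢ - uⱼ|⁻¹ = q! ε (2/L)^q 2^{q-1}`,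
the last sum being the leading coefficient of `T_q`. So `L^q ≤ 4^q q! ε / (2β)` for all `L < r`.
-/

open Real MeasureTheory Polynomial Finset

theorem prod_abs_sub_eq_neg_one_pow_mul_prod {n : ℕ} {v : Fin n → ℝ} (hv : StrictAnti v)
    (i : Fin n) :
    ∏ j ∈ univ.erase i, |v i - v j| = (-1) ^ (i : ℕ) * ∏ j ∈ univ.erase i, (v i - v j) := by
  have hsplit : univ.erase i = Iio i ∪ Ioi i := by ext j; simp
  rw [hsplit, prod_union (disjoint_Ioi_Iio i).symm, prod_union (disjoint_Ioi_Iio i).symm,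
    prod_congr rfl fun j hj => abs_of_neg (sub_neg.2 (hv (mem_Iio.1 hj))),
    prod_congr rfl fun j hj => abs_of_pos (sub_pos.2 (hv (mem_Ioi.1 hj))), prod_neg,
    Fin.card_Iio]
  ring

theorem sum_inv_prod_abs_sub_le {n : ℕ} {c : ℝ} (hc : 0 < c) {u t : Fin (n + 1) → ℝ}
    (hu : Function.Injective u) (hut : ∀ i j, c * |u i - u j| ≤ |t i - t j|) :
    ∑ i, (∏ j ∈ univ.erase i, |t i - t j|)⁻¹ ≤
      (c ^ n)⁻¹ * ∑ i, (∏ j ∈ univ.erase i, |u i - u j|)⁻¹ := by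
  rw [mul_sum]
  refine sum_le_sum fun i _ => ?_
  have hpos : 0 < ∏ j ∈ univ.erase i, c * |u i - u j| := prod_pos fun j hj =>
    mul_pos hc (abs_pos.2 (sub_ne_zero.2 (hu.ne (ne_of_mem_erase hj).symm)))
  have hconst : c ^ n = ∏ _j ∈ univ.erase i, c := by simp
  rw [← mul_inv, hconst, ← prod_mul_distrib]
  exact inv_anti₀ hpos (prod_le_prod (fun j _ => by positivity) fun j _ => hut i j)

namespace Polynomial.Chebyshev

theorem strictAnti_node_fin (q : ℕ) : StrictAnti fun i : Fin (q + 1) => node q i :=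
  fun _ j hij => node_lt (Nat.lt_succ_iff.1 j.isLt) hij

theorem sum_inv_prod_abs_node_sub_node (q : ℕ) :
    ∑ i : Fin (q + 1), (∏ j ∈ univ.erase i, |node q i - node q j|)⁻¹ = 2 ^ (q - 1) := by
  have hanti := strictAnti_node_fin q
  have hcoeff := Lagrange.coeff_eq_sum (s := univ) hanti.injective.injOn (P := T ℝ q)
    (by simp; exact_mod_cast q.lt_succ_self)
  have hlead : (T ℝ q).coeff q = 2 ^ (q - 1) := by
    simpa [leadingCoeff] using leadingCoeff_T ℝ q
  simp only [card_univ, Fintype.card_fin, add_tsub_cancel_right, hlead] at hcoeff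
  rw [hcoeff]
  -- `T q` is `(-1) ^ i` at the `i`-th node, which is the sign of the `i`-th Lagrange weight.
  refine sum_congr rfl fun i _ => ?_
  rw [prod_abs_sub_eq_neg_one_pow_mul_prod hanti,
    eval_T_real_node (mem_Iic.2 (Nat.lt_succ_iff.1 i.isLt)), mul_inv, ← div_eq_mul_inv,
    ← inv_pow, inv_neg_one]

end Polynomial.Chebyshev

theorem Polynomial.iteratedDerivWithin_eval {𝕜 : Type*} [NontriviallyNormedField 𝕜]
    {s : Set 𝕜} {x : 𝕜} (hs : UniqueDiffOn 𝕜 s) (hx : x ∈ s) (P : 𝕜[X]) (n : ℕ) :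
    iteratedDerivWithin n (fun y => P.eval y) s x = (derivative^[n] P).eval x := by
  rw [iteratedDerivWithin_eq_iteratedDeriv hs (f := fun y => P.eval y)
    (P.contDiff_aeval n).contDiffAt hx]
  induction n generalizing P with
  | zero => simp
  | succ n ih =>
    have hderiv : (deriv fun y => P.eval y) = fun y => P.derivative.eval y :=
      _root_.funext fun _ => P.deriv
    rw [iteratedDeriv_succ', hderiv, ih, Function.iterate_succ_apply]

section Rolle

variable {a b : ℝ}

theorem exists_strictMono_derivWithin_eq_zero {n : ℕ} {g : ℝ → ℝ}
    (hg : ContinuousOn g (Set.Icc a b)) {t : Fin (n + 2) → ℝ} (ht : StrictMono t)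
    (hmem : ∀ i, t i ∈ Set.Icc a b) (hzero : ∀ i, g (t i) = 0) :
    ∃ s : Fin (n + 1) → ℝ, StrictMono s ∧ (∀ i, s i ∈ Set.Icc a b) ∧
      ∀ i, derivWithin g (Set.Icc a b) (s i) = 0 := by
  have hrolle (i : Fin (n + 1)) : ∃ c ∈ Set.Ioo (t i.castSucc) (t i.succ),
      derivWithin g (Set.Icc a b) c = 0 := by
    obtain ⟨c, hc, hc0⟩ := exists_deriv_eq_zero (ht i.castSucc_lt_succ)
      (hg.mono (Set.Icc_subset_Icc (hmem _).1 (hmem _).2)) (by rw [hzero, hzero])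
    refine ⟨c, hc, ?_⟩
    rwa [derivWithin_of_mem_nhds (Icc_mem_nhds ((hmem _).1.trans_lt hc.1)
      (hc.2.trans_le (hmem _).2))]
  choose s hs hs0 using hrolle
  refine ⟨s, fun i j hij => ?_, fun i => ⟨(hmem _).1.trans (hs i).1.le,
    (hs i).2.le.trans (hmem _).2⟩, hs0⟩
  calc s i < t i.succ := (hs i).2
    _ ≤ t j.castSucc := ht.monotone (Fin.succ_le_castSucc_iff.2 hij)
    _ < s j := (hs j).1

theorem exists_iteratedDerivWithin_eq_zero {n : ℕ} {g : ℝ → ℝ}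
    (hg : ContDiffOn ℝ n g (Set.Icc a b)) {t : Fin (n + 1) → ℝ} (ht : StrictMono t)
    (hmem : ∀ i, t i ∈ Set.Icc a b) (hzero : ∀ i, g (t i) = 0) :
    ∃ ξ ∈ Set.Icc a b, iteratedDerivWithin n g (Set.Icc a b) ξ = 0 := by
  induction n generalizing g with
  | zero => exact ⟨t 0, hmem 0, by simpa using hzero 0⟩
  | succ n ih =>
    obtain ⟨s, hs, hsmem, hszero⟩ :=
      exists_strictMono_derivWithin_eq_zero hg.continuousOn ht hmem hzero
    have hab : a < b := (hmem 0).1.trans_lt ((ht Fin.zero_lt_one).trans_le (hmem 1).2)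
    have hg' := hg.derivWithin (uniqueDiffOn_Icc hab) (m := n) (by norm_cast)
    obtain ⟨ξ, hξ, hξ0⟩ := ih hg' hs hsmem hszero
    exact ⟨ξ, hξ, by rwa [iteratedDerivWithin_succ']⟩

theorem exists_iteratedDerivWithin_eq_factorial_mul_sum {n : ℕ} {f : ℝ → ℝ}
    (hf : ContDiffOn ℝ n f (Set.Icc a b)) {t : Fin (n + 1) → ℝ} (ht : StrictMono t)
    (hmem : ∀ i, t i ∈ Set.Icc a b) :
    ∃ ξ ∈ Set.Icc a b, iteratedDerivWithin n f (Set.Icc a b) ξ =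
      n.factorial * ∑ i, f (t i) / ∏ j ∈ univ.erase i, (t i - t j) := by
  rcases n with _ | n
  · exact ⟨t 0, hmem 0, by simp⟩
  have hab : a < b := (hmem 0).1.trans_lt ((ht Fin.zero_lt_one).trans_le (hmem 1).2)
  have hinj : Set.InjOn t (univ : Finset (Fin (n + 2))) := ht.injective.injOn
  set P := Lagrange.interpolate univ t fun i => f (t i)
  have hP : P.degree < #(univ : Finset (Fin (n + 2))) := Lagrange.degree_interpolate_lt _ hinj
  have hPt (i : Fin (n + 2)) : P.eval (t i) = f (t i) :=
    Lagrange.eval_interpolate_at_node _ hinj (mem_univ i)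
  have hPc : ContDiff ℝ (n + 1 : ℕ) fun y => P.eval y := P.contDiff_aeval _
  obtain ⟨ξ, hξ, hξ0⟩ := exists_iteratedDerivWithin_eq_zero (g := f - fun y => P.eval y)
    (hf.sub hPc.contDiffOn) ht hmem (by simp [hPt])
  refine ⟨ξ, hξ, ?_⟩
  rw [iteratedDerivWithin_sub hξ (uniqueDiffOn_Icc hab) (hf ξ hξ) hPc.contDiffWithinAt,
    Polynomial.iteratedDerivWithin_eval (uniqueDiffOn_Icc hab) hξ, sub_eq_zero] at hξ0
  rw [hξ0, Lagrange.eval_iterate_derivative_eq_sum hinj hP (by simp) ξ]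
  simp [hPt]

theorem le_factorial_mul_mul_sum_inv_prod_abs_sub {β ε : ℝ} {q : ℕ} {f : ℝ → ℝ}
    (hf : ContDiffOn ℝ q f (Set.Icc a b))
    (hder : ∀ s ∈ Set.Icc a b, β ≤ |iteratedDerivWithin q f (Set.Icc a b) s|)
    {t : Fin (q + 1) → ℝ} (ht : StrictMono t) (hmem : ∀ i, t i ∈ Set.Icc a b)
    (hval : ∀ i, |f (t i)| ≤ ε) :
    β ≤ q.factorial * ε * ∑ i, (∏ j ∈ univ.erase i, |t i - t j|)⁻¹ := by
  obtain ⟨ξ, hξ, hξeq⟩ := exists_iteratedDerivWithin_eq_factorial_mul_sum hf ht hmem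
  calc β ≤ |iteratedDerivWithin q f (Set.Icc a b) ξ| := hder ξ hξ
    _ ≤ q.factorial * ∑ i, |f (t i)| / ∏ j ∈ univ.erase i, |t i - t j| := by
      rw [hξeq, abs_mul, Nat.abs_cast]
      refine mul_le_mul_of_nonneg_left ?_ (by positivity)
      refine (abs_sum_le_sum_abs _ _).trans_eq (sum_congr rfl fun i _ => ?_)
      rw [abs_div, abs_prod]
    _ ≤ q.factorial * ∑ i, ε * (∏ j ∈ univ.erase i, |t i - t j|)⁻¹ := by
      gcongr with i
      exact (div_eq_mul_inv _ _).trans_le (mul_le_mul_of_nonneg_right (hval i) (by positivity))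
    _ = q.factorial * ε * ∑ i, (∏ j ∈ univ.erase i, |t i - t j|)⁻¹ := by
      rw [mul_assoc, ← mul_sum]

end Rolle

noncomputable def cumulativeVolume (E : Set ℝ) (t : ℝ) : ℝ :=
  (volume (E ∩ Set.Iic t)).toReal

namespace cumulativeVolume

variable {E : Set ℝ}

theorem monotone (hE : volume E ≠ ⊤) : Monotone (cumulativeVolume E) := fun _ _ hst =>
  ENNReal.toReal_mono (measure_ne_top_of_subset Set.inter_subset_left hE)
    (measure_mono (Set.inter_subset_inter_right _ (Set.Iic_subset_Iic.2 hst)))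

theorem le_add_volume_inter_Ioc (hE : volume E ≠ ⊤) (s t : ℝ) :
    cumulativeVolume E t ≤ cumulativeVolume E s + (volume (E ∩ Set.Ioc s t)).toReal := by
  have hcover : E ∩ Set.Iic t ⊆ (E ∩ Set.Iic s) ∪ (E ∩ Set.Ioc s t) := by
    rintro y ⟨hy, hyt⟩
    rcases le_or_gt y s with hys | hys
    exacts [Or.inl ⟨hy, hys⟩, Or.inr ⟨hy, hys, hyt⟩]
  rw [cumulativeVolume, cumulativeVolume, ← ENNReal.toReal_add
    (measure_ne_top_of_subset Set.inter_subset_left hE)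
    (measure_ne_top_of_subset Set.inter_subset_left hE)]
  exact ENNReal.toReal_mono (by finiteness) ((measure_mono hcover).trans (measure_union_le _ _))

theorem lipschitzWith (hE : volume E ≠ ⊤) : LipschitzWith 1 (cumulativeVolume E) := by
  refine LipschitzWith.of_le_add fun s t => (le_add_volume_inter_Ioc hE t s).trans ?_
  gcongr
  calc (volume (E ∩ Set.Ioc t s)).toReal ≤ (volume (Set.Ioc t s)).toReal :=
        ENNReal.toReal_mono (by simp) (measure_mono Set.inter_subset_right)
    _ = max (s - t) 0 := by rw [Real.volume_Ioc, ENNReal.toReal_ofReal']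
    _ ≤ dist s t := max_le (Real.dist_eq s t ▸ le_abs_self _) dist_nonneg

end cumulativeVolume

section

variable {E : Set ℝ} {a b : ℝ}

theorem exists_mem_cumulativeVolume_eq (hEc : IsClosed E) (hEsub : E ⊆ Set.Icc a b) {x : ℝ}
    (hx0 : 0 < x) (hxr : x ≤ (volume E).toReal) : ∃ t ∈ E, cumulativeVolume E t = x := by
  have hE : volume E ≠ ⊤ := measure_ne_top_of_subset hEsub measure_Icc_lt_top.ne
  have hF := cumulativeVolume.lipschitzWith hE
  set S := {t | x ≤ cumulativeVolume E t}
  have hbS : b ∈ S := by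
    simpa [S, cumulativeVolume, Set.inter_eq_self_of_subset_left
      (hEsub.trans Set.Icc_subset_Iic_self)] using hxr
  have hSbdd : BddBelow S := by
    refine ⟨a, fun t ht => not_lt.1 fun hta => hx0.not_ge ?_⟩
    have hempty : E ∩ Set.Iic t = ∅ := Set.eq_empty_of_forall_notMem
      fun y ⟨hy, hyt⟩ => (hyt.trans_lt hta).not_ge (hEsub hy).1
    simpa [S, cumulativeVolume, hempty] using ht
  -- `τ` lies in `E`: off the closed set `E`, `cumulativeVolume E` is constant just to the left.
  set τ := sInf S
  have hτS : τ ∈ S := (isClosed_le continuous_const hF.continuous).csInf_mem ⟨b, hbS⟩ hSbdd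
  have hbelow (d : ℝ) (hd : 0 < d) : cumulativeVolume E (τ - d) < x :=
    not_le.1 fun h => (csInf_le hSbdd h).not_gt (by linarith)
  refine ⟨τ, ?_, le_antisymm ?_ hτS⟩
  · by_contra hτE
    obtain ⟨δ, hδ, hball⟩ := Metric.isOpen_iff.1 hEc.isOpen_compl τ hτE
    have hgap : E ∩ Set.Ioc (τ - δ / 2) τ = ∅ := Set.eq_empty_of_forall_notMem
      fun y ⟨hy, hy1, hy2⟩ => hball (by
        rw [Metric.mem_ball, Real.dist_eq, abs_lt]; constructor <;> linarith) hy
    have h := cumulativeVolume.le_add_volume_inter_Ioc hE (τ - δ / 2) τ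
    rw [hgap, measure_empty, ENNReal.toReal_zero, add_zero] at h
    exact (hbelow (δ / 2) (by positivity)).not_ge (hτS.trans h)
  · by_contra! h
    have h1 := hF.le_add_mul τ (τ - (cumulativeVolume E τ - x))
    rw [NNReal.coe_one, one_mul, Real.dist_eq, sub_sub_cancel, abs_of_pos (sub_pos.2 h)] at h1
    linarith [hbelow _ (sub_pos.2 h)]

theorem exists_strictMono_mem_abs_sub_le (hEc : IsClosed E)
    (hEsub : E ⊆ Set.Icc a b) {ι : Type*} [Preorder ι] {x : ι → ℝ} (hx : StrictMono x)
    (hx0 : ∀ i, 0 < x i) (hxr : ∀ i, x i ≤ (volume E).toReal) :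
    ∃ t : ι → ℝ, StrictMono t ∧ (∀ i, t i ∈ E) ∧ ∀ i j, |x i - x j| ≤ |t i - t j| := by
  have hE : volume E ≠ ⊤ := measure_ne_top_of_subset hEsub measure_Icc_lt_top.ne
  choose t htE htx using fun i => exists_mem_cumulativeVolume_eq hEc hEsub (hx0 i) (hxr i)
  refine ⟨t, fun i j hij => (cumulativeVolume.monotone hE).reflect_lt ?_, htE, fun i j => ?_⟩
  · rw [htx, htx]; exact hx hij
  · simpa [htx, Real.dist_eq] using (cumulativeVolume.lipschitzWith hE).dist_le_mul (t i) (t j)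

open Polynomial.Chebyshev in
theorem exists_strictMono_mem_node_spaced (hEc : IsClosed E)
    (hEsub : E ⊆ Set.Icc a b) (q : ℕ) {L : ℝ} (hL : 0 < L) (hLE : L < (volume E).toReal) :
    ∃ t : Fin (q + 1) → ℝ, StrictMono t ∧ (∀ i, t i ∈ E) ∧
      ∀ i j : Fin (q + 1), L / 2 * |node q i - node q j| ≤ |t i - t j| := by
  set x : Fin (q + 1) → ℝ := fun i => (volume E).toReal - L / 2 * (1 + node q i)
  have hx : StrictMono x := fun i j hij => by
    have := strictAnti_node_fin q hij
    simp only [x]; nlinarith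
  obtain ⟨t, ht, htE, hxt⟩ := exists_strictMono_mem_abs_sub_le hEc hEsub hx
    (fun i => by have := (node_mem_Icc (n := q) (i := i)).2; simp only [x]; nlinarith)
    (fun i => by have := (node_mem_Icc (n := q) (i := i)).1; simp only [x]; nlinarith)
  refine ⟨t, ht, htE, fun i j => (hxt i j).trans_eq' ?_⟩
  rw [abs_sub_comm (node q i), ← abs_of_pos (half_pos hL), ← abs_mul]
  congr 1
  simp only [x]
  ring

end

theorem two_mul_mul_pow_le_of_lt_volume {q : ℕ} (hq : 1 ≤ q) {a b β ε L : ℝ} {f : ℝ → ℝ}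
    (hf : ContDiffOn ℝ q f (Set.Icc a b))
    (hder : ∀ t ∈ Set.Icc a b, β ≤ |iteratedDerivWithin q f (Set.Icc a b) t|)
    (hL : 0 < L) (hLE : L < (volume {t | t ∈ Set.Icc a b ∧ |f t| ≤ ε}).toReal) :
    2 * β * L ^ q ≤ 4 ^ q * (q.factorial * ε) := by
  have hEc : IsClosed {t | t ∈ Set.Icc a b ∧ |f t| ≤ ε} :=
    hf.continuousOn.abs.preimage_isClosed_of_isClosed isClosed_Icc isClosed_Iic
  obtain ⟨t, ht, htE, hspaced⟩ :=
    exists_strictMono_mem_node_spaced hEc (fun _ h => h.1) q hL hLE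
  have hβ := le_factorial_mul_mul_sum_inv_prod_abs_sub hf hder ht (fun i => (htE i).1)
    fun i => (htE i).2
  have hsum := sum_inv_prod_abs_sub_le (half_pos hL)
    (Polynomial.Chebyshev.strictAnti_node_fin q).injective hspaced
  rw [Polynomial.Chebyshev.sum_inv_prod_abs_node_sub_node] at hsum
  have hε : 0 ≤ ε := (abs_nonneg _).trans (htE 0).2
  calc 2 * β * L ^ q ≤ 2 * (q.factorial * ε * (((L / 2) ^ q)⁻¹ * 2 ^ (q - 1))) * L ^ q := by
        gcongr
        exact hβ.trans (by gcongr)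
    _ = 4 ^ q * (q.factorial * ε) := by
        obtain ⟨n, rfl⟩ := Nat.exists_eq_add_of_le' hq
        rw [Nat.add_sub_cancel, div_pow, show (4 : ℝ) = 2 * 2 by norm_num, mul_pow]
        field_simp
        ring

theorem russmann_measure_estimate_general (q : ℕ) (hq : 1 ≤ q) (β ε : ℝ) (hβ : 0 < β) (hε : 0 < ε)
    (a b : ℝ) (f : ℝ → ℝ)
    (hf : ContDiffOn ℝ q f (Set.Icc a b))
    (hder : ∀ t ∈ Set.Icc a b, β ≤ |iteratedDerivWithin q f (Set.Icc a b) t|) :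
    volume {t : ℝ | t ∈ Set.Icc a b ∧ |f t| ≤ ε} ≤
      ENNReal.ofReal (4 * ((q.factorial * ε) / (2 * β)) ^ ((1 : ℝ) / q)) := by
  have hE : volume {t : ℝ | t ∈ Set.Icc a b ∧ |f t| ≤ ε} ≠ ⊤ :=
    measure_ne_top_of_subset (fun _ h => h.1) measure_Icc_lt_top.ne
  rw [← ENNReal.ofReal_toReal hE]
  refine ENNReal.ofReal_le_ofReal (le_of_forall_lt_imp_le_of_dense fun L hL => ?_)
  rcases le_or_gt L 0 with hL0 | hL0
  · exact hL0.trans (by positivity)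
  have hpow := two_mul_mul_pow_le_of_lt_volume hq hf hder hL0 hL
  rw [one_div, ← div_le_iff₀' four_pos, Real.le_rpow_inv_iff_of_pos (by positivity)
    (by positivity) (by positivity), Real.rpow_natCast, div_pow, div_le_iff₀ (by positivity),
    div_mul_eq_mul_div, le_div_iff₀ (by positivity)]
  linarith

/-- Rüssmann's measure estimate: if `f` is `q`-times continuously differentiable on `[a,b]`
with `|f^{(q)}| ≥ β` there, then the Lebesgue measure of `{t ∈ [a,b] : |f t| ≤ ε}` is at
most `4 (q! ε / (2β))^{1/q}`. -/
theorem russmann_measure_estimate (q : ℕ) (hq : 1 ≤ q) (β ε : ℝ) (hβ : 0 < β) (hε : 0 < ε)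
    (a b : ℝ) (hab : a ≤ b) (f : ℝ → ℝ)
    (hf : ContDiffOn ℝ q f (Set.Icc a b))
    (hder : ∀ t ∈ Set.Icc a b, β ≤ |iteratedDerivWithin q f (Set.Icc a b) t|) :
    volume {t : ℝ | t ∈ Set.Icc a b ∧ |f t| ≤ ε} ≤
      ENNReal.ofReal (4 * ((q.factorial * ε) / (2 * β)) ^ ((1 : ℝ) / q)) :=
  russmann_measure_estimate_general q hq β ε hβ hε a b f hf hder
end

section
/- Let n ≥ 1 be an integer, let k ∈ ℤⁿ be nonzero, let a ∈ ℝ and δ > 0. Then the n-dimensional Lebesgue measure of the set {ω ∈ [0,2π]ⁿ : |k·ω + a| ≤ δ} is at most (2π)^{n(n−1)} · 4δ / |k|₁. -/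
open Real MeasureTheory

/-!
The resonance zone is a slab `|k·ω + a| ≤ δ` cut by the cube. Pick a coordinate `i` where `|kᵢ|`
is maximal. The linear change of variables replacing `ωᵢ` by `k·ω` has determinant `kᵢ` and maps
the zone into a box with one side `2δ` and the others `2π`, so the zone has measure at most
`2δ (2π)^(n-1) / |kᵢ|`; finally `|k|₁ ≤ n |kᵢ|` and `n (2π)^(n-1) ≤ 2 (2π)^(n(n-1))`.
-/

section Slab

variable {ι : Type*} [Fintype ι]

theorem exists_sum_abs_le_card_mul_abs {c : ι → ℝ} (hc : c ≠ 0) :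
    ∃ i, c i ≠ 0 ∧ ∑ j, |c j| ≤ Fintype.card ι * |c i| := by
  obtain ⟨j, hj⟩ := Function.ne_iff.mp hc
  obtain ⟨i, -, hmax⟩ := Finset.exists_max_image Finset.univ (fun j => |c j|) ⟨j, Finset.mem_univ j⟩
  refine ⟨i, fun hi => hj ?_, ?_⟩
  · simpa [hi] using hmax j (Finset.mem_univ j)
  · simpa [nsmul_eq_mul] using Finset.sum_le_card_nsmul Finset.univ _ _ hmax

variable [DecidableEq ι]

theorem volume_preimage_update_dotProduct (c : ι → ℝ) {i : ι} (hi : c i ≠ 0)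
    (s : ι → Set ℝ) :
    volume {ω : ι → ℝ | ∀ j, Function.update ω i (c ⬝ᵥ ω) j ∈ s j} =
      ENNReal.ofReal |(c i)⁻¹| * ∏ j, volume (s j) := by
  let M : Matrix ι ι ℝ := Matrix.updateRow 1 i c
  have hM : ∀ ω, Matrix.toLin' M ω = Function.update ω i (c ⬝ᵥ ω) := fun ω => by
    rw [Matrix.toLin'_apply, Matrix.updateRow_mulVec, Matrix.one_mulVec]
  have hdet : LinearMap.det (Matrix.toLin' M) = c i := by
    rw [LinearMap.det_toLin', ← Matrix.cramer_transpose_apply, Matrix.transpose_one,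
      Matrix.cramer_one]
    rfl
  have hpre : {ω : ι → ℝ | ∀ j, Function.update ω i (c ⬝ᵥ ω) j ∈ s j} =
      Matrix.toLin' M ⁻¹' Set.univ.pi s := by
    ext ω
    simp [hM]
  rw [hpre, Measure.addHaar_preimage_linearMap volume (hdet ▸ hi), hdet, volume_pi_pi]

theorem volume_slab_le (c : ι → ℝ) {i : ι} (hi : c i ≠ 0) (a δ L : ℝ) :
    volume {ω : ι → ℝ | (∀ j, ω j ∈ Set.Icc 0 L) ∧ |(∑ j, c j * ω j) + a| ≤ δ} ≤
      ENNReal.ofReal (2 * δ / |c i|) * ENNReal.ofReal L ^ (Fintype.card ι - 1) := by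
  let s := Function.update (fun _ => Set.Icc 0 L) i (Set.Icc (-a - δ) (-a + δ))
  have hsub : {ω : ι → ℝ | (∀ j, ω j ∈ Set.Icc 0 L) ∧ |(∑ j, c j * ω j) + a| ≤ δ} ⊆
      {ω | ∀ j, Function.update ω i (c ⬝ᵥ ω) j ∈ s j} := by
    rintro ω ⟨hbox, hslab⟩ j
    rcases eq_or_ne j i with rfl | hj
    · simp only [s, Function.update_self, Set.mem_Icc, dotProduct]
      constructor <;> linarith [abs_le.mp hslab]
    · simpa [s, hj] using hbox j
  have hprod : ∏ j, volume (s j) =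
      ENNReal.ofReal (2 * δ) * ENNReal.ofReal L ^ (Fintype.card ι - 1) := by
    have hvol : (fun j => volume (s j)) =
        Function.update (fun _ => ENNReal.ofReal L) i (ENNReal.ofReal (2 * δ)) := by
      ext1 j
      rcases eq_or_ne j i with rfl | hj
      · simp only [s, Function.update_self, Real.volume_Icc]
        ring_nf
      · simp [s, hj]
    rw [hvol, Finset.prod_update_of_mem (Finset.mem_univ i), Finset.prod_const,
      Finset.card_sdiff, Finset.card_univ, Finset.inter_univ, Finset.card_singleton]
  refine (measure_mono hsub).trans_eq ?_
  rw [volume_preimage_update_dotProduct c hi, hprod, ← mul_assoc,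
    ← ENNReal.ofReal_mul (abs_nonneg _), abs_inv, inv_mul_eq_div]

end Slab

theorem natCast_mul_pow_pred_le {x : ℝ} (hx : 2 ≤ x) (n : ℕ) :
    (n : ℝ) * x ^ (n - 1) ≤ 2 * x ^ (n * (n - 1)) := by
  have hn : (n : ℝ) ≤ 2 * x ^ (n - 1) :=
    calc (n : ℝ) ≤ 2 ^ n := by exact_mod_cast n.lt_two_pow_self.le
      _ ≤ 2 ^ (n - 1 + 1) := pow_le_pow_right₀ (by norm_num) (by omega)
      _ = 2 * 2 ^ (n - 1) := pow_succ' _ _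
      _ ≤ 2 * x ^ (n - 1) := by gcongr
  have hexp : 2 * (n - 1) ≤ n * (n - 1) := by
    rcases Nat.lt_or_ge n 2 with h | h
    · simp [show n - 1 = 0 by omega]
    · exact Nat.mul_le_mul_right _ h
  calc (n : ℝ) * x ^ (n - 1) ≤ 2 * x ^ (n - 1) * x ^ (n - 1) := by gcongr
    _ = 2 * x ^ (2 * (n - 1)) := by ring
    _ ≤ 2 * x ^ (n * (n - 1)) := by gcongr; linarith

theorem resonance_zone_measure_general (n : ℕ) (k : Fin n → ℤ) (hk : k ≠ 0)
    (a δ : ℝ) (hδ : 0 < δ) :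
    volume {ω : Fin n → ℝ |
        (∀ i, ω i ∈ Set.Icc 0 (2 * π)) ∧ |(∑ i, (k i : ℝ) * ω i) + a| ≤ δ} ≤
      ENNReal.ofReal ((2 * π) ^ (n * (n - 1)) * (4 * δ) / (∑ i, |(k i : ℝ)|)) := by
  have hk' : (fun i => (k i : ℝ)) ≠ 0 := fun h => hk (funext fun i => by simpa using congr_fun h i)
  obtain ⟨i, hi, hsum⟩ := exists_sum_abs_le_card_mul_abs hk'
  have hci : 0 < |(k i : ℝ)| := abs_pos.mpr hi
  have hS : 0 < ∑ j, |(k j : ℝ)| :=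
    Finset.sum_pos' (fun j _ => abs_nonneg _) ⟨i, Finset.mem_univ i, hci⟩
  rw [Fintype.card_fin] at hsum
  refine (volume_slab_le (fun j => (k j : ℝ)) hi a δ (2 * π)).trans ?_
  rw [Fintype.card_fin, ← ENNReal.ofReal_pow (by positivity),
    ← ENNReal.ofReal_mul (by positivity)]
  apply ENNReal.ofReal_le_ofReal
  rw [div_mul_eq_mul_div, div_le_div_iff₀ hci hS]
  have hpow := natCast_mul_pow_pred_le (x := 2 * π) (by linarith [pi_gt_three]) n
  calc 2 * δ * (2 * π) ^ (n - 1) * ∑ j, |(k j : ℝ)|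
      ≤ 2 * δ * (2 * π) ^ (n - 1) * (n * |(k i : ℝ)|) := by gcongr
    _ = 2 * δ * |(k i : ℝ)| * (n * (2 * π) ^ (n - 1)) := by ring
    _ ≤ 2 * δ * |(k i : ℝ)| * (2 * (2 * π) ^ (n * (n - 1))) := by gcongr
    _ = (2 * π) ^ (n * (n - 1)) * (4 * δ) * |(k i : ℝ)| := by ring

/-- Measure estimate of a single resonance zone: for a nonzero integer vector `k ∈ ℤⁿ`,
`a ∈ ℝ` and `δ > 0`, the Lebesgue measure of
`{ω ∈ [0,2π]ⁿ : |k·ω + a| ≤ δ}` is at most `(2π)^{n(n-1)} · 4δ / |k|₁`. -/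
theorem resonance_zone_measure (n : ℕ) (hn : 1 ≤ n) (k : Fin n → ℤ) (hk : k ≠ 0)
    (a δ : ℝ) (hδ : 0 < δ) :
    volume {ω : Fin n → ℝ |
        (∀ i, ω i ∈ Set.Icc 0 (2 * π)) ∧ |(∑ i, (k i : ℝ) * ω i) + a| ≤ δ} ≤
      ENNReal.ofReal ((2 * π) ^ (n * (n - 1)) * (4 * δ) / (∑ i, |(k i : ℝ)|)) :=
  resonance_zone_measure_general n k hk a δ hδ
end

section
/- Let n ≥ 1 be an integer, let Δ : [0,∞) → [1,∞), let γ > 0, and suppose S := ∑_{k∈ℤⁿ, k≠0} 1/(|k|₁ · Δ(|k|₁)) < ∞. Then the n-dimensional Lebesgue measure of the set of ω ∈ [0,2π]ⁿ for which there exists a nonzero k ∈ ℤⁿ with |k·ω| < γ/Δ(|k|₁) is at most 4 (2π)^{n(n−1)} γ S. Consequently, the set of ω ∈ [0,2π]ⁿ satisfying the Brjuno–Rüssmann non-resonance conditions |k·ω| ≥ γ/Δ(|k|₁) for every nonzero k ∈ ℤⁿ has Lebesgue measure at least (2π)ⁿ − 4 (2π)^{n(n−1)} γ S. -/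
/-!
Fix a nonzero `k` and a coordinate `i` where `|kᵢ|` is maximal, so that `|k|₁ ≤ n |kᵢ|`. Slicing
the cube `[0, 2π]ⁿ` along the `i`-th axis (Fubini), every slice of the slab `|k·ω| < ε` is an
interval of length at most `2ε/|kᵢ|`, so the slab has measure at most
`2ε (2π)ⁿ⁻¹/|kᵢ| ≤ 2nε (2π)ⁿ⁻¹/|k|₁`. With `ε = γ/Δ(|k|₁)` and `n (2π)ⁿ⁻¹ ≤ 2 (2π)^{n(n-1)}`, a
union bound over `k` gives the first estimate, and the second follows by passing to the complement
in the cube.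
-/

open Real MeasureTheory Set

open scoped ENNReal

theorem Real.volume_setOf_abs_mul_add_lt {a : ℝ} (ha : a ≠ 0) (c ε : ℝ) :
    volume {x : ℝ | |a * x + c| < ε} = ENNReal.ofReal (2 * ε / |a|) := by
  have hset : {x : ℝ | |a * x + c| < ε} = (a * ·) ⁻¹' Metric.ball (-c) ε := by
    ext x; simp [Real.dist_eq]
  rw [hset, Real.volume_preimage_mul_left ha, Real.volume_ball,
    ← ENNReal.ofReal_mul (by positivity), abs_inv, inv_mul_eq_div]

theorem setOf_forall_mem_eq_univ_pi {ι β : Type*} (t : Set β) :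
    {ω : ι → β | ∀ i, ω i ∈ t} = univ.pi fun _ => t := by
  ext; exact mem_univ_pi.symm

theorem volume_setOf_forall_mem_Icc {ι : Type*} [Fintype ι] (L : ℝ) :
    volume {ω : ι → ℝ | ∀ i, ω i ∈ Icc 0 L} = ENNReal.ofReal L ^ Fintype.card ι := by
  rw [setOf_forall_mem_eq_univ_pi, volume_pi_pi]
  simp [Real.volume_Icc]

theorem measurableSet_setOf_forall_mem_Icc {ι : Type*} [Fintype ι] (L : ℝ) :
    MeasurableSet {ω : ι → ℝ | ∀ i, ω i ∈ Icc 0 L} := by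
  rw [setOf_forall_mem_eq_univ_pi]
  exact MeasurableSet.univ_pi fun _ => measurableSet_Icc

theorem volume_le_mul_volume_of_fiber_le {α : Type*} [MeasureSpace α]
    [SigmaFinite (volume : Measure α)] {m : ℕ} (i : Fin (m + 1))
    {B : Set (Fin (m + 1) → α)} (hB : MeasurableSet B) {T : Set (Fin m → α)} (hT : MeasurableSet T)
    (hBT : ∀ ω ∈ B, i.removeNth ω ∈ T) (c : ℝ≥0∞)
    (hfiber : ∀ y ∈ T, volume {x : α | Fin.insertNth i x y ∈ B} ≤ c) :
    volume B ≤ c * volume T := by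
  let e := MeasurableEquiv.piFinSuccAbove (fun _ => α) i
  have hslice (y : Fin m → α) :
      volume ((fun x => (x, y)) ⁻¹' (e.symm ⁻¹' B)) ≤ T.indicator (fun _ => c) y := by
    by_cases hy : y ∈ T
    · rw [indicator_of_mem hy]; exact hfiber y hy
    · rw [indicator_of_notMem hy, nonpos_iff_eq_zero, measure_eq_zero_iff_ae_notMem]
      refine Filter.Eventually.of_forall fun x hx => hy ?_
      simpa using hBT (Fin.insertNth i x y) hx
  calc volume B = volume (e.symm ⁻¹' B) :=
        ((volume_preserving_piFinSuccAbove (fun _ => α) i).symm.measure_preimage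
          hB.nullMeasurableSet).symm
    _ = ∫⁻ y, volume ((fun x => (x, y)) ⁻¹' (e.symm ⁻¹' B)) := by
        rw [Measure.volume_eq_prod, Measure.prod_apply_symm (e.symm.measurable hB)]
    _ ≤ ∫⁻ y, T.indicator (fun _ => c) y := lintegral_mono hslice
    _ = c * volume T := lintegral_indicator_const hT c

theorem volume_box_inter_abs_sum_mul_lt_le {m : ℕ} (a : Fin (m + 1) → ℝ) {i : Fin (m + 1)}
    (hi : a i ≠ 0) (L ε : ℝ) :
    volume {ω : Fin (m + 1) → ℝ | (∀ j, ω j ∈ Icc 0 L) ∧ |∑ j, a j * ω j| < ε} ≤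
      ENNReal.ofReal (2 * ε / |a i|) * ENNReal.ofReal L ^ m := by
  have hmeas :
      MeasurableSet {ω : Fin (m + 1) → ℝ | (∀ j, ω j ∈ Icc 0 L) ∧ |∑ j, a j * ω j| < ε} :=
    (measurableSet_setOf_forall_mem_Icc L).inter (measurableSet_lt
      (by fun_prop : Measurable fun ω : Fin (m + 1) → ℝ => |∑ j, a j * ω j|) measurable_const)
  have hB := volume_le_mul_volume_of_fiber_le i hmeas (measurableSet_setOf_forall_mem_Icc L)
    (fun ω hω j => hω.1 _) (ENNReal.ofReal (2 * ε / |a i|)) fun y _ => ?_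
  · rwa [volume_setOf_forall_mem_Icc, Fintype.card_fin] at hB
  rw [← Real.volume_setOf_abs_mul_add_lt hi (∑ j, a (i.succAbove j) * y j) ε]
  refine measure_mono fun x hx => show _ < ε from ?_
  simpa only [Fin.sum_univ_succAbove _ i, Fin.insertNth_apply_same,
    Fin.insertNth_apply_succAbove] using hx.2

theorem exists_ne_zero_sum_abs_le_card_mul_abs {ι : Type*} [Fintype ι] {a : ι → ℝ}
    (ha : a ≠ 0) :
    ∃ i, a i ≠ 0 ∧ ∑ j, |a j| ≤ Fintype.card ι * |a i| := by
  obtain ⟨j, hj⟩ := Function.ne_iff.mp ha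
  obtain ⟨i, -, hmax⟩ :=
    Finset.exists_max_image Finset.univ (fun i => |a i|) ⟨j, Finset.mem_univ j⟩
  refine ⟨i, fun hi => hj ?_, ?_⟩
  · simpa [hi] using hmax j (Finset.mem_univ j)
  · simpa using Finset.sum_le_card_nsmul Finset.univ _ _ hmax

theorem volume_box_inter_abs_sum_mul_lt_le_sum_abs {n : ℕ} {a : Fin n → ℝ} (ha : a ≠ 0)
    {L ε : ℝ} (hL : 0 ≤ L) (hε : 0 ≤ ε) :
    volume {ω : Fin n → ℝ | (∀ j, ω j ∈ Icc 0 L) ∧ |∑ j, a j * ω j| < ε} ≤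
      ENNReal.ofReal (2 * n * L ^ (n - 1) * ε / ∑ j, |a j|) := by
  obtain ⟨i, hi, hsum⟩ := exists_ne_zero_sum_abs_le_card_mul_abs ha
  obtain ⟨m, rfl⟩ : ∃ m, n = m + 1 := Nat.exists_eq_succ_of_ne_zero i.pos.ne'
  refine (volume_box_inter_abs_sum_mul_lt_le a hi L ε).trans ?_
  rw [← ENNReal.ofReal_pow hL, ← ENNReal.ofReal_mul (by positivity)]
  refine ENNReal.ofReal_le_ofReal ?_
  rw [Fintype.card_fin] at hsum
  have hai : 0 < |a i| := abs_pos.mpr hi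
  have hsum_pos : 0 < ∑ j, |a j| :=
    hai.trans_le (Finset.single_le_sum (fun j _ => abs_nonneg (a j)) (Finset.mem_univ i))
  rw [Nat.add_sub_cancel, div_mul_eq_mul_div, div_le_div_iff₀ hai hsum_pos]
  calc 2 * ε * L ^ m * ∑ j, |a j| ≤ 2 * ε * L ^ m * ((m + 1 : ℕ) * |a i|) := by gcongr
    _ = _ := by ring

theorem nat_mul_pow_pred_le_two_mul_pow {x : ℝ} (hx : 2 ≤ x) (n : ℕ) :
    n * x ^ (n - 1) ≤ 2 * x ^ (n * (n - 1)) := by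
  rcases n with _ | m
  · simp
  have hm : (m + 1 : ℝ) ≤ 2 * x ^ (m * m) := calc
    (m + 1 : ℝ) ≤ 2 ^ (m + 1) := by exact_mod_cast (Nat.lt_two_pow_self).le
    _ = 2 * 2 ^ m := by ring
    _ ≤ 2 * x ^ m := by gcongr
    _ ≤ 2 * x ^ (m * m) := by gcongr; exacts [by linarith, Nat.le_mul_self m]
  calc ((m + 1 : ℕ) : ℝ) * x ^ (m + 1 - 1) ≤ 2 * x ^ (m * m) * x ^ m := by
        push_cast; gcongr
    _ = 2 * x ^ ((m + 1) * (m + 1 - 1)) := by rw [Nat.add_sub_cancel]; ring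

theorem MeasureTheory.measure_iUnion_le_ofReal_of_hasSum {α ι : Type*} [MeasurableSpace α]
    [Countable ι] (μ : Measure α) {s : ι → Set α} {f : ι → ℝ} {S : ℝ} (hf : ∀ i, 0 ≤ f i)
    (hS : HasSum f S) (h : ∀ i, μ (s i) ≤ ENNReal.ofReal (f i)) :
    μ (⋃ i, s i) ≤ ENNReal.ofReal S := calc
  μ (⋃ i, s i) ≤ ∑' i, μ (s i) := measure_iUnion_le s
  _ ≤ ∑' i, ENNReal.ofReal (f i) := ENNReal.tsum_le_tsum h
  _ = ENNReal.ofReal S := by rw [← ENNReal.ofReal_tsum_of_nonneg hf hS.summable, hS.tsum_eq]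

theorem volume_box_two_pi_inter_abs_sum_mul_lt_div_le {n : ℕ} {a : Fin n → ℝ} (ha : a ≠ 0)
    {γ D : ℝ} (hγ : 0 ≤ γ) (hD : 0 ≤ D) :
    volume {ω : Fin n → ℝ | (∀ j, ω j ∈ Icc 0 (2 * π)) ∧ |∑ j, a j * ω j| < γ / D} ≤
      ENNReal.ofReal (4 * (2 * π) ^ (n * (n - 1)) * γ * (1 / ((∑ j, |a j|) * D))) := by
  refine (volume_box_inter_abs_sum_mul_lt_le_sum_abs ha (by positivity) (by positivity)).trans
    (ENNReal.ofReal_le_ofReal ?_)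
  have hconst := nat_mul_pow_pred_le_two_mul_pow (by linarith [pi_gt_three] : (2 : ℝ) ≤ 2 * π) n
  calc 2 * n * (2 * π) ^ (n - 1) * (γ / D) / ∑ j, |a j|
      = 2 * (n * (2 * π) ^ (n - 1)) * (γ / ((∑ j, |a j|) * D)) := by
        rw [mul_comm (∑ j, |a j|), ← div_div]; ring
    _ ≤ 2 * (2 * (2 * π) ^ (n * (n - 1))) * (γ / ((∑ j, |a j|) * D)) := by gcongr
    _ = 4 * (2 * π) ^ (n * (n - 1)) * γ * (1 / ((∑ j, |a j|) * D)) := by ring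

theorem brjuno_russmann_measure_general (n : ℕ) (Δ : ℝ → ℝ)
    (hΔ1 : ∀ t, 0 ≤ t → 1 ≤ Δ t) (γ : ℝ) (hγ : 0 < γ) (S : ℝ)
    (hS : HasSum (fun k : {k : Fin n → ℤ // k ≠ 0} =>
      1 / ((∑ i, |(k.1 i : ℝ)|) * Δ (∑ i, |(k.1 i : ℝ)|))) S) :
    volume {ω : Fin n → ℝ | (∀ i, ω i ∈ Set.Icc 0 (2 * π)) ∧
        ∃ k : Fin n → ℤ, k ≠ 0 ∧
          |∑ i, (k i : ℝ) * ω i| < γ / Δ (∑ i, |(k i : ℝ)|)} ≤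
      ENNReal.ofReal (4 * (2 * π) ^ (n * (n - 1)) * γ * S) ∧
    ENNReal.ofReal ((2 * π) ^ n - 4 * (2 * π) ^ (n * (n - 1)) * γ * S) ≤
      volume {ω : Fin n → ℝ | (∀ i, ω i ∈ Set.Icc 0 (2 * π)) ∧
        ∀ k : Fin n → ℤ, k ≠ 0 →
          γ / Δ (∑ i, |(k i : ℝ)|) ≤ |∑ i, (k i : ℝ) * ω i|} := by
  set C := 4 * (2 * π) ^ (n * (n - 1)) * γ
  set box : Set (Fin n → ℝ) := {ω | ∀ i, ω i ∈ Icc 0 (2 * π)}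
  set bad : Set (Fin n → ℝ) := {ω | (∀ i, ω i ∈ Icc 0 (2 * π)) ∧
    ∃ k : Fin n → ℤ, k ≠ 0 ∧ |∑ i, (k i : ℝ) * ω i| < γ / Δ (∑ i, |(k i : ℝ)|)}
  have hC : 0 ≤ C := by positivity
  have hΔ (k : Fin n → ℤ) : 0 ≤ Δ (∑ i, |(k i : ℝ)|) := zero_le_one.trans (hΔ1 _ (by positivity))
  have hterm (k : {k : Fin n → ℤ // k ≠ 0}) :
      0 ≤ 1 / ((∑ i, |(k.1 i : ℝ)|) * Δ (∑ i, |(k.1 i : ℝ)|)) := by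
    have := hΔ k.1; positivity
  have hbad : volume bad ≤ ENNReal.ofReal (C * S) := by
    refine (measure_mono ?_).trans <| measure_iUnion_le_ofReal_of_hasSum volume
      (s := fun k : {k : Fin n → ℤ // k ≠ 0} => {ω | (∀ i, ω i ∈ Icc 0 (2 * π)) ∧
        |∑ i, (k.1 i : ℝ) * ω i| < γ / Δ (∑ i, |(k.1 i : ℝ)|)})
      (fun k => mul_nonneg hC (hterm k)) (hS.mul_left C) fun k =>
        volume_box_two_pi_inter_abs_sum_mul_lt_div_le (a := fun i => (k.1 i : ℝ))
          (fun h => k.2 (funext fun i => by simpa using congr_fun h i)) hγ.le (hΔ k.1)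
    rintro ω ⟨hω, k, hk, hlt⟩
    exact mem_iUnion.2 ⟨⟨k, hk⟩, hω, hlt⟩
  refine ⟨hbad, ?_⟩
  calc ENNReal.ofReal ((2 * π) ^ n - C * S)
      = ENNReal.ofReal (2 * π) ^ n - ENNReal.ofReal (C * S) := by
        rw [ENNReal.ofReal_sub _ (mul_nonneg hC (hS.nonneg hterm)),
          ENNReal.ofReal_pow (by positivity)]
    _ ≤ volume box - volume bad := by
        rw [volume_setOf_forall_mem_Icc, Fintype.card_fin]
        exact tsub_le_tsub_left hbad _
    _ ≤ volume (box \ bad) := le_measure_sdiff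
    _ ≤ _ := measure_mono ?_
  rintro ω ⟨hω, hres⟩
  exact ⟨hω, fun k hk => not_lt.1 fun hlt => hres ⟨hω, k, hk, hlt⟩⟩

/-- Measure estimate for Brjuno–Rüssmann non-resonant frequencies: if
`S = ∑_{k ∈ ℤⁿ, k ≠ 0} 1/(|k|₁ Δ(|k|₁)) < ∞`, then the set of `ω ∈ [0,2π]ⁿ` violating
`|k·ω| ≥ γ/Δ(|k|₁)` for some nonzero `k` has measure at most `4 (2π)^{n(n-1)} γ S`, and
consequently the set of Brjuno–Rüssmann frequency vectors in `[0,2π]ⁿ` has measure at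
least `(2π)ⁿ - 4 (2π)^{n(n-1)} γ S`. -/
theorem brjuno_russmann_measure (n : ℕ) (hn : 1 ≤ n) (Δ : ℝ → ℝ)
    (hΔ1 : ∀ t, 0 ≤ t → 1 ≤ Δ t) (γ : ℝ) (hγ : 0 < γ) (S : ℝ)
    (hS : HasSum (fun k : {k : Fin n → ℤ // k ≠ 0} =>
      1 / ((∑ i, |(k.1 i : ℝ)|) * Δ (∑ i, |(k.1 i : ℝ)|))) S) :
    volume {ω : Fin n → ℝ | (∀ i, ω i ∈ Set.Icc 0 (2 * π)) ∧
        ∃ k : Fin n → ℤ, k ≠ 0 ∧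
          |∑ i, (k i : ℝ) * ω i| < γ / Δ (∑ i, |(k i : ℝ)|)} ≤
      ENNReal.ofReal (4 * (2 * π) ^ (n * (n - 1)) * γ * S) ∧
    ENNReal.ofReal ((2 * π) ^ n - 4 * (2 * π) ^ (n * (n - 1)) * γ * S) ≤
      volume {ω : Fin n → ℝ | (∀ i, ω i ∈ Set.Icc 0 (2 * π)) ∧
        ∀ k : Fin n → ℤ, k ≠ 0 →
          γ / Δ (∑ i, |(k i : ℝ)|) ≤ |∑ i, (k i : ℝ) * ω i|} :=
  brjuno_russmann_measure_general n Δ hΔ1 γ hγ S hS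
end

section
/- Let (X, μ) be a measure space, let g_∞ : X → ℝ and g_t : X → ℝ (for integers t ≥ 1) be measurable, and let c ≥ 0, M ≥ 0 and 0 < ε ≤ 1. Assume: (1) |g_t(x) − g_∞(x)| ≤ c/t for every x ∈ X and every t ≥ 1; (2) μ({x : |g_∞(x)| < η}) ≤ M η for every η > 0; and (3) μ({x : |g_t(x)| < η}) ≤ M η for every t ≥ 1 and η > 0. Then μ(⋃_{t≥1} {x : |g_t(x)| < ε²}) ≤ (3 + c) M ε. -/
open Real MeasureTheory

/-- Abstract measure estimate for a union of shifted resonance sets: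
if `|g_t - g_∞| ≤ c/t`, each sublevel set `{|g_∞| < η}` and `{|g_t| < η}` has measure
at most `M η`, and `0 < ε ≤ 1`, then `μ(⋃_{t ≥ 1} {|g_t| < ε²}) ≤ (3 + c) M ε`. -/
theorem union_resonance_measure {X : Type*} [MeasurableSpace X] (μ : Measure X)
    (ginf : X → ℝ) (g : ℕ → X → ℝ)
    (hginf_meas : Measurable ginf) (hg_meas : ∀ t : ℕ, 1 ≤ t → Measurable (g t))
    (c M ε : ℝ) (hc : 0 ≤ c) (hM : 0 ≤ M) (hε0 : 0 < ε) (hε1 : ε ≤ 1)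
    (h1 : ∀ t : ℕ, 1 ≤ t → ∀ x : X, |g t x - ginf x| ≤ c / t)
    (h2 : ∀ η : ℝ, 0 < η → μ {x : X | |ginf x| < η} ≤ ENNReal.ofReal (M * η))
    (h3 : ∀ t : ℕ, 1 ≤ t → ∀ η : ℝ, 0 < η →
      μ {x : X | |g t x| < η} ≤ ENNReal.ofReal (M * η)) :
    μ (⋃ (t : ℕ) (_ : 1 ≤ t), {x : X | |g t x| < ε ^ 2}) ≤
      ENNReal.ofReal ((3 + c) * M * ε) := by
  set T : ℕ := ⌈c / ε⌉₊ with hT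
  -- inclusion
  have hsub : (⋃ (t : ℕ) (_ : 1 ≤ t), {x : X | |g t x| < ε ^ 2}) ⊆
      (⋃ t ∈ Finset.Icc 1 T, {x : X | |g t x| < ε ^ 2}) ∪
        {x : X | |ginf x| < ε ^ 2 + ε} := by
    intro x hx
    simp only [Set.mem_iUnion] at hx
    obtain ⟨t, ht, hxt⟩ := hx
    by_cases htT : t ≤ T
    · left
      exact Set.mem_biUnion (Finset.mem_Icc.2 ⟨ht, htT⟩) hxt
    · right
      push_neg at htT
      have htpos : (0 : ℝ) < t := by exact_mod_cast Nat.lt_of_lt_of_le (Nat.zero_lt_succ _) ht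
      have hct : c / t ≤ ε := by
        rw [div_le_iff₀ htpos]
        have h : c / ε < t := lt_of_le_of_lt (Nat.le_ceil _) (by exact_mod_cast htT)
        have h2 := mul_lt_mul_of_pos_right h hε0
        rw [div_mul_cancel₀ c hε0.ne'] at h2
        linarith
      have := h1 t ht x
      have : |ginf x| ≤ |g t x| + |g t x - ginf x| := by
        calc |ginf x| = |g t x - (g t x - ginf x)| := by ring_nf
          _ ≤ |g t x| + |g t x - ginf x| := abs_sub _ _
      have hxt' : |g t x| < ε ^ 2 := hxt
      simp only [Set.mem_setOf_eq]
      linarith [h1 t ht x]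
  have hmeas := measure_mono (μ := μ) hsub
  have hA : μ (⋃ t ∈ Finset.Icc 1 T, {x : X | |g t x| < ε ^ 2}) ≤
      (T : ℕ) • ENNReal.ofReal (M * ε ^ 2) := by
    calc μ (⋃ t ∈ Finset.Icc 1 T, {x : X | |g t x| < ε ^ 2})
        ≤ ∑ t ∈ Finset.Icc 1 T, μ {x : X | |g t x| < ε ^ 2} :=
          measure_biUnion_finset_le (μ := μ) _ _
      _ ≤ ∑ _t ∈ Finset.Icc 1 T, ENNReal.ofReal (M * ε ^ 2) := by
          refine Finset.sum_le_sum fun t ht => ?_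
          exact h3 t (Finset.mem_Icc.1 ht).1 _ (by positivity)
      _ = (Finset.Icc 1 T).card • ENNReal.ofReal (M * ε ^ 2) := by
          rw [Finset.sum_const]
      _ = (T : ℕ) • ENNReal.ofReal (M * ε ^ 2) := by
          rw [Nat.card_Icc]; norm_num
  have hB : μ {x : X | |ginf x| < ε ^ 2 + ε} ≤ ENNReal.ofReal (M * (ε ^ 2 + ε)) :=
    h2 _ (by positivity)
  have hTr : (T : ℝ) ≤ c / ε + 1 := le_of_lt (Nat.ceil_lt_add_one (by positivity))
  calc μ (⋃ (t : ℕ) (_ : 1 ≤ t), {x : X | |g t x| < ε ^ 2})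
      ≤ μ ((⋃ t ∈ Finset.Icc 1 T, {x : X | |g t x| < ε ^ 2}) ∪
          {x : X | |ginf x| < ε ^ 2 + ε}) := hmeas
    _ ≤ μ (⋃ t ∈ Finset.Icc 1 T, {x : X | |g t x| < ε ^ 2}) +
          μ {x : X | |ginf x| < ε ^ 2 + ε} := measure_union_le _ _
    _ ≤ (T : ℕ) • ENNReal.ofReal (M * ε ^ 2) + ENNReal.ofReal (M * (ε ^ 2 + ε)) :=
          add_le_add hA hB
    _ = ENNReal.ofReal ((T : ℝ) * (M * ε ^ 2) + M * (ε ^ 2 + ε)) := by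
          rw [nsmul_eq_mul, ENNReal.ofReal_add (by positivity) (by positivity),
            ← ENNReal.ofReal_natCast T, ← ENNReal.ofReal_mul (by positivity)]
    _ ≤ ENNReal.ofReal ((3 + c) * M * ε) := by
          apply ENNReal.ofReal_le_ofReal
          have hε2 : ε ^ 2 ≤ ε := by nlinarith
          have hkey : (T : ℝ) * (M * ε ^ 2) ≤ (c / ε + 1) * (M * ε ^ 2) := by
            apply mul_le_mul_of_nonneg_right hTr (by positivity)
          have hdiv : (c / ε) * ε ^ 2 = c * ε := by field_simp
          nlinarith [mul_le_mul_of_nonneg_left hε2 hM]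
end

section
/- There exists a constant C₀ ≥ 1 with the following property. Let ρ > 0, 0 < δ ≤ 1 with δ < ρ, and M ≥ 0 with M ≤ δ/(2 e C₀). Let A : ℤ × ℤ → ℂ satisfy |A(i,j)| ≤ M e^{−ρ|i−j|} for all i, j. Define the matrix powers inductively by A¹ = A and A^{m+1}(i,j) = ∑_{k∈ℤ} A^m(i,k) A(k,j). Then all of these series converge absolutely, and for every (i,j) the series B(i,j) := ∑_{m≥1} A^m(i,j)/m! converges absolutely with |B(i,j)| ≤ 2 M e^{−(ρ−δ)|i−j|}. -/
/-!
Write `w_c(i,j) = e^{-c|i-j|}`. By the triangle inequality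
`w_{ρ-δ}(i,k) w_ρ(k,j) ≤ w_{ρ-δ}(i,j) w_δ(k,j)`, and `∑_k w_δ(k,j) = (1+e^{-δ})/(1-e^{-δ}) ≤ 2e/δ`,
so a product of a `w_{ρ-δ}`-decaying row and a `w_ρ`-decaying column loses only the factor `2e/δ`.
By induction `|A^{m+1}(i,j)| ≤ M q^m w_{ρ-δ}(i,j)` with `q = 2eM/δ ≤ 1/2` for `C₀ = 2`;
dropping the factorials, the series for `B(i,j)` is dominated by `M w_{ρ-δ}(i,j) ∑ 2^{-m}`.
-/

open Real

/-- Powers of a bilateral infinite complex matrix, defined entrywise: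
`matPow A 1 = A` and `matPow A (m+1) (i,j) = ∑_{k ∈ ℤ} matPow A m (i,k) · A (k,j)`. -/
noncomputable def matPow (A : ℤ → ℤ → ℂ) : ℕ → ℤ → ℤ → ℂ
  | 0 => fun i j => if i = j then 1 else 0
  | 1 => A
  | m + 2 => fun i j => ∑' k : ℤ, matPow A (m + 1) i k * A k j

theorem hasSum_pow_natAbs {r : ℝ} (hr0 : 0 ≤ r) (hr1 : r < 1) :
    HasSum (fun k : ℤ => r ^ k.natAbs) ((1 + r) / (1 - r)) := by
  have hgeom := hasSum_geometric_of_lt_one hr0 hr1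
  have hneg : HasSum (fun n : ℕ => r ^ (-((n : ℤ) + 1)).natAbs) (r * (1 - r)⁻¹) := by
    have hterm : ∀ n : ℕ, r ^ (-((n : ℤ) + 1)).natAbs = r * r ^ n := fun n => by
      rw [Int.natAbs_neg, ← Nat.cast_succ, Int.natAbs_natCast, pow_succ']
    simpa only [hterm] using hgeom.mul_left r
  have h := HasSum.of_nat_of_neg_add_one (f := fun k : ℤ => r ^ k.natAbs)
    (by simpa using hgeom) hneg
  convert h using 1
  field_simp [(sub_pos.2 hr1).ne']

theorem div_exp_one_le_one_sub_exp_neg {c : ℝ} (hc : 0 ≤ c) (hc1 : c ≤ 1) :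
    c / exp 1 ≤ 1 - exp (-c) := by
  have h1 : c * exp (-1) ≤ c * exp (-c) :=
    mul_le_mul_of_nonneg_left (exp_le_exp.2 (neg_le_neg hc1)) hc
  have h2 : (c + 1) * exp (-c) ≤ 1 := by
    rw [exp_neg, ← div_eq_mul_inv, div_le_one (exp_pos c)]
    linarith [add_one_le_exp c]
  rw [div_eq_mul_inv, ← exp_neg]
  linarith

noncomputable def expWeight (c : ℝ) (i j : ℤ) : ℝ := exp (-c * |(i : ℝ) - (j : ℝ)|)

theorem expWeight_pos (c : ℝ) (i j : ℤ) : 0 < expWeight c i j := exp_pos _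

theorem expWeight_le_expWeight {c c' : ℝ} (h : c' ≤ c) (i j : ℤ) :
    expWeight c i j ≤ expWeight c' i j :=
  exp_le_exp.2 (mul_le_mul_of_nonneg_right (neg_le_neg h) (abs_nonneg _))

theorem expWeight_eq_pow (c : ℝ) (i j : ℤ) :
    expWeight c i j = exp (-c) ^ (i - j).natAbs := by
  rw [expWeight, ← exp_nat_mul, Nat.cast_natAbs, Int.cast_abs, Int.cast_sub]
  ring_nf

theorem hasSum_expWeight {c : ℝ} (hc : 0 < c) (j : ℤ) :
    HasSum (fun k => expWeight c k j) ((1 + exp (-c)) / (1 - exp (-c))) := by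
  simp only [expWeight_eq_pow]
  exact ((Equiv.subRight j).hasSum_iff (f := fun k : ℤ => exp (-c) ^ k.natAbs)).2
    (hasSum_pow_natAbs (exp_pos _).le (exp_lt_one_iff.2 (neg_lt_zero.2 hc)))

theorem one_add_exp_neg_div_one_sub_exp_neg_le_s13 {c : ℝ} (hc : 0 < c) (hc1 : c ≤ 1) :
    (1 + exp (-c)) / (1 - exp (-c)) ≤ 2 * exp 1 / c := by
  have hlow := div_exp_one_le_one_sub_exp_neg hc.le hc1
  have hpos : 0 < c / exp 1 := by positivity
  calc (1 + exp (-c)) / (1 - exp (-c)) ≤ 2 / (c / exp 1) := by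
        gcongr
        linarith [exp_lt_one_iff.2 (neg_lt_zero.2 hc)]
    _ = 2 * exp 1 / c := by rw [div_div_eq_mul_div]

theorem expWeight_mul_le {ρ δ : ℝ} (hδρ : δ ≤ ρ) (i j k : ℤ) :
    expWeight (ρ - δ) i k * expWeight ρ k j ≤ expWeight (ρ - δ) i j * expWeight δ k j := by
  simp only [expWeight, ← exp_add]
  refine exp_le_exp.2 ?_
  have htri : |(i : ℝ) - j| ≤ |(i : ℝ) - k| + |(k : ℝ) - j| := abs_sub_le _ _ _
  nlinarith [mul_le_mul_of_nonneg_left htri (sub_nonneg.2 hδρ)]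

section Convolution

variable {ρ δ : ℝ} {u v : ℤ → ℂ} {a b : ℝ} {i j : ℤ}

theorem norm_mul_le_expWeight (hδρ : δ ≤ ρ) (hu : ∀ k, ‖u k‖ ≤ a * expWeight (ρ - δ) i k)
    (hv : ∀ k, ‖v k‖ ≤ b * expWeight ρ k j) (k : ℤ) :
    ‖u k * v k‖ ≤ a * b * expWeight (ρ - δ) i j * expWeight δ k j := by
  have ha : 0 ≤ a := nonneg_of_mul_nonneg_left ((norm_nonneg _).trans (hu k)) (expWeight_pos _ _ _)
  have hb : 0 ≤ b := nonneg_of_mul_nonneg_left ((norm_nonneg _).trans (hv k)) (expWeight_pos _ _ _)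
  calc ‖u k * v k‖ ≤ (a * expWeight (ρ - δ) i k) * (b * expWeight ρ k j) := by
        rw [norm_mul]
        exact mul_le_mul (hu k) (hv k) (norm_nonneg _) (mul_nonneg ha (expWeight_pos _ _ _).le)
    _ = a * b * (expWeight (ρ - δ) i k * expWeight ρ k j) := by ring
    _ ≤ a * b * (expWeight (ρ - δ) i j * expWeight δ k j) :=
        mul_le_mul_of_nonneg_left (expWeight_mul_le hδρ i j k) (mul_nonneg ha hb)
    _ = a * b * expWeight (ρ - δ) i j * expWeight δ k j := by ring

theorem summable_norm_mul_of_expWeight (hδ : 0 < δ) (hδρ : δ ≤ ρ)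
    (hu : ∀ k, ‖u k‖ ≤ a * expWeight (ρ - δ) i k) (hv : ∀ k, ‖v k‖ ≤ b * expWeight ρ k j) :
    Summable fun k => ‖u k * v k‖ :=
  ((hasSum_expWeight hδ j).summable.mul_left (a * b * expWeight (ρ - δ) i j)).of_nonneg_of_le
    (fun _ => norm_nonneg _) (norm_mul_le_expWeight hδρ hu hv)

theorem norm_tsum_mul_le_of_expWeight (hδ : 0 < δ) (hδ1 : δ ≤ 1) (hδρ : δ ≤ ρ)
    (hu : ∀ k, ‖u k‖ ≤ a * expWeight (ρ - δ) i k) (hv : ∀ k, ‖v k‖ ≤ b * expWeight ρ k j) :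
    ‖∑' k, u k * v k‖ ≤ a * b * (2 * exp 1 / δ) * expWeight (ρ - δ) i j := by
  have hbound := norm_mul_le_expWeight hδρ hu hv
  have hnonneg : 0 ≤ a * b * expWeight (ρ - δ) i j :=
    nonneg_of_mul_nonneg_left ((norm_nonneg _).trans (hbound 0)) (expWeight_pos _ _ _)
  calc ‖∑' k, u k * v k‖
      ≤ a * b * expWeight (ρ - δ) i j * ((1 + exp (-δ)) / (1 - exp (-δ))) :=
        tsum_of_norm_bounded ((hasSum_expWeight hδ j).mul_left _) hbound
    _ ≤ a * b * expWeight (ρ - δ) i j * (2 * exp 1 / δ) :=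
        mul_le_mul_of_nonneg_left (one_add_exp_neg_div_one_sub_exp_neg_le_s13 hδ hδ1) hnonneg
    _ = a * b * (2 * exp 1 / δ) * expWeight (ρ - δ) i j := by ring

end Convolution

theorem norm_matPow_succ_le {ρ δ M : ℝ} {A : ℤ → ℤ → ℂ} (hδ : 0 < δ) (hδ1 : δ ≤ 1)
    (hδρ : δ ≤ ρ) (hM : 0 ≤ M) (hA : ∀ i j, ‖A i j‖ ≤ M * expWeight ρ i j) (m : ℕ) (i j : ℤ) :
    ‖matPow A (m + 1) i j‖ ≤ M * (M * (2 * exp 1 / δ)) ^ m * expWeight (ρ - δ) i j := by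
  induction m generalizing j with
  | zero =>
    simpa [matPow] using
      (hA i j).trans (mul_le_mul_of_nonneg_left (expWeight_le_expWeight (sub_le_self ρ hδ.le) i j) hM)
  | succ m ih =>
    calc ‖matPow A (m + 2) i j‖ = ‖∑' k, matPow A (m + 1) i k * A k j‖ := by rw [matPow]
      _ ≤ M * (M * (2 * exp 1 / δ)) ^ m * M * (2 * exp 1 / δ) * expWeight (ρ - δ) i j :=
        norm_tsum_mul_le_of_expWeight hδ hδ1 hδρ ih (fun k => hA k j)
      _ = M * (M * (2 * exp 1 / δ)) ^ (m + 1) * expWeight (ρ - δ) i j := by ring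

theorem norm_div_factorial_le (z : ℂ) (n : ℕ) : ‖z / (n.factorial : ℂ)‖ ≤ ‖z‖ := by
  rw [norm_div, Complex.norm_natCast]
  exact div_le_self (norm_nonneg z) (by exact_mod_cast n.factorial_pos)

/-- Entrywise exponential bound for `B = e^A - Id = ∑_{m ≥ 1} A^m / m!` when `A` has
exponentially off-diagonal decay of rate `ρ` with a sufficiently small constant `M`:
there is `C₀ ≥ 1` such that whenever `0 < δ ≤ 1`, `δ < ρ` and `M ≤ δ/(2 e C₀)`,
all the matrix-power series converge absolutely and
`|B(i,j)| ≤ 2 M e^{-(ρ-δ)|i-j|}`. -/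
theorem matrix_exponential_decay :
    ∃ C₀ : ℝ, 1 ≤ C₀ ∧
      ∀ (ρ δ M : ℝ), 0 < δ → δ ≤ 1 → δ < ρ → 0 ≤ M →
        M ≤ δ / (2 * Real.exp 1 * C₀) →
      ∀ A : ℤ → ℤ → ℂ,
        (∀ i j : ℤ, ‖A i j‖ ≤ M * Real.exp (-ρ * |(i : ℝ) - (j : ℝ)|)) →
      ∀ i j : ℤ,
        (∀ m : ℕ, 1 ≤ m → Summable (fun k : ℤ => ‖matPow A m i k * A k j‖)) ∧
        Summable (fun m : ℕ => ‖matPow A (m + 1) i j / ((m + 1).factorial : ℂ)‖) ∧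
        ‖∑' m : ℕ, matPow A (m + 1) i j / ((m + 1).factorial : ℂ)‖ ≤
          2 * M * Real.exp (-(ρ - δ) * |(i : ℝ) - (j : ℝ)|) := by
  refine ⟨2, one_le_two, fun ρ δ M hδ hδ1 hδρ hM0 hM A hA i j => ?_⟩
  have hratio : M * (2 * exp 1 / δ) ≤ 1 / 2 := by
    rw [le_div_iff₀ (by positivity)] at hM
    rw [mul_div_assoc', div_le_iff₀ hδ]
    linarith
  have hpow := norm_matPow_succ_le hδ hδ1 hδρ.le hM0 hA
  have hterm : ∀ m : ℕ, ‖matPow A (m + 1) i j / ((m + 1).factorial : ℂ)‖ ≤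
      M * expWeight (ρ - δ) i j * (1 / 2) ^ m := fun m =>
    calc _ ≤ ‖matPow A (m + 1) i j‖ := norm_div_factorial_le _ _
      _ ≤ M * (M * (2 * exp 1 / δ)) ^ m * expWeight (ρ - δ) i j := hpow m i j
      _ ≤ M * (1 / 2) ^ m * expWeight (ρ - δ) i j := by
        have := (expWeight_pos (ρ - δ) i j).le
        gcongr
      _ = M * expWeight (ρ - δ) i j * (1 / 2) ^ m := by ring
  have hgeom := hasSum_geometric_two.mul_left (M * expWeight (ρ - δ) i j)
  refine ⟨fun m hm => ?_, hgeom.summable.of_nonneg_of_le (fun _ => norm_nonneg _) hterm,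
    (tsum_of_norm_bounded hgeom hterm).trans_eq (by rw [expWeight]; ring)⟩
  obtain ⟨n, rfl⟩ := Nat.exists_eq_add_of_le' hm
  exact summable_norm_mul_of_expWeight hδ hδρ.le (hpow n i) (fun k => hA k j)
end

section
/- Let a > 0 and C_V ≥ 0, and let (v_m)_{m≥0} be complex numbers with |v_m| ≤ C_V e^{−2am} for every m ≥ 0. For integers i, j ≥ 1 define p(i,j) = (1/2)(v_{|i−j|} − v_{i+j}) if i ≠ j and p(j,j) = v_0 − (1/2) v_{2j}, and define p^∞(i,j) = (1/2) v_{|i−j|} if i ≠ j and p^∞(j,j) = v_0. Then: (1) |p(i,j)| ≤ (3/2) C_V e^{−2a|i−j|} for all i, j ≥ 1; (2) p(i+t, j+t) → p^∞(i,j) as t → ∞; and (3) |p(i+t, j+t) − p^∞(i,j)| ≤ (C_V/t) · max(1, 1/(4ae)) · e^{−2a|i−j|} for all integers t ≥ 1. -/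
open Real Filter

/-- Töplitz–Lipschitz properties of the perturbation coefficients
`p(i,j) = ½(v_{|i-j|} - v_{i+j})` (`i ≠ j`), `p(j,j) = v₀ - ½ v_{2j}` built from a cosine
series with exponentially decaying coefficients `|v_m| ≤ C_V e^{-2am}`:
(1) exponential off-diagonal decay `|p(i,j)| ≤ (3/2) C_V e^{-2a|i-j|}`;
(2) the diagonal-shift limits `p^∞(i,j)` exist;
(3) Lipschitz at infinity with rate `C_V/t · max(1, 1/(4ae)) · e^{-2a|i-j|}`. -/
theorem perturbation_coefficients_toplitz_lipschitz
    (a CV : ℝ) (ha : 0 < a) (hCV : 0 ≤ CV)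
    (v : ℕ → ℂ) (hv : ∀ m : ℕ, ‖v m‖ ≤ CV * Real.exp (-(2 * a * m)))
    (p pinf : ℤ → ℤ → ℂ)
    (hp : ∀ i j : ℤ, 1 ≤ i → 1 ≤ j →
      p i j = if i = j then v 0 - (1 / 2 : ℂ) * v (2 * j).natAbs
              else (1 / 2 : ℂ) * (v (i - j).natAbs - v (i + j).natAbs))
    (hpinf : ∀ i j : ℤ, 1 ≤ i → 1 ≤ j →
      pinf i j = if i = j then v 0 else (1 / 2 : ℂ) * v (i - j).natAbs) :
    (∀ i j : ℤ, 1 ≤ i → 1 ≤ j →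
      ‖p i j‖ ≤ 3 / 2 * CV * Real.exp (-(2 * a * |(i : ℝ) - (j : ℝ)|))) ∧
    (∀ i j : ℤ, 1 ≤ i → 1 ≤ j →
      Tendsto (fun t : ℕ => p (i + t) (j + t)) atTop (nhds (pinf i j))) ∧
    (∀ i j : ℤ, 1 ≤ i → 1 ≤ j → ∀ t : ℕ, 1 ≤ t →
      ‖p (i + t) (j + t) - pinf i j‖ ≤
        CV / t * max 1 (1 / (4 * a * Real.exp 1)) *
          Real.exp (-(2 * a * |(i : ℝ) - (j : ℝ)|))) := by

  have hkey : ∀ m : ℤ, ‖v m.natAbs‖ ≤ CV * Real.exp (-(2 * a * |(m : ℝ)|)) := by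
    intro m
    have h := hv m.natAbs
    rwa [Nat.cast_natAbs, Int.cast_abs] at h
  have hmono : ∀ x y : ℝ, x ≤ y → Real.exp (-(2 * a * y)) ≤ Real.exp (-(2 * a * x)) := by
    intro x y hxy
    exact Real.exp_le_exp.2 (by nlinarith)
  -- (1)
  have h1 : ∀ i j : ℤ, 1 ≤ i → 1 ≤ j →
      ‖p i j‖ ≤ 3 / 2 * CV * Real.exp (-(2 * a * |(i : ℝ) - (j : ℝ)|)) := by
    intro i j hi hj
    rw [hp i j hi hj]
    by_cases h : i = j
    · subst h
      simp only [if_pos rfl]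
      have hD : |(i : ℝ) - (i : ℝ)| = 0 := by simp
      rw [hD, show (-(2 * a * (0:ℝ))) = 0 by ring, Real.exp_zero, mul_one]
      have hv0 := hv 0
      have e0 : Real.exp (-(2 * a * ((0:ℕ):ℝ))) = 1 := by norm_num
      rw [e0, mul_one] at hv0
      have hv2 : ‖v (2 * i).natAbs‖ ≤ CV := by
        have := hv (2 * i).natAbs
        have hle : Real.exp (-(2 * a * ((2 * i).natAbs : ℝ))) ≤ 1 := by
          rw [Real.exp_le_one_iff]
          have : (0:ℝ) ≤ ((2 * i).natAbs : ℝ) := by positivity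
          nlinarith
        nlinarith [norm_nonneg (v (2 * i).natAbs)]
      calc ‖v 0 - (1 / 2 : ℂ) * v (2 * i).natAbs‖
          ≤ ‖v 0‖ + ‖(1 / 2 : ℂ) * v (2 * i).natAbs‖ := norm_sub_le _ _
        _ = ‖v 0‖ + (1 / 2) * ‖v (2 * i).natAbs‖ := by rw [norm_mul]; norm_num
        _ ≤ CV + (1 / 2) * CV := by nlinarith
        _ ≤ 3 / 2 * CV := by nlinarith
    · simp only [if_neg h]
      have hd := hkey (i - j)
      have hs := hkey (i + j)
      have hij : |((i + j : ℤ) : ℝ)| = (i : ℝ) + j := by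
        rw [abs_of_pos]
        · push_cast; ring
        · push_cast
          have : (1:ℝ) ≤ (i:ℝ) := by exact_mod_cast hi
          have : (1:ℝ) ≤ (j:ℝ) := by exact_mod_cast hj
          linarith
      have hdD : |((i - j : ℤ) : ℝ)| = |(i : ℝ) - (j : ℝ)| := by push_cast; ring_nf
      have habs : |(i : ℝ) - (j : ℝ)| ≤ (i : ℝ) + j := by
        have h1 : (1:ℝ) ≤ (i:ℝ) := by exact_mod_cast hi
        have h2 : (1:ℝ) ≤ (j:ℝ) := by exact_mod_cast hj
        rw [abs_sub_le_iff]; constructor <;> linarith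
      rw [hdD] at hd
      rw [hij] at hs
      have hmono2 : Real.exp (-(2 * a * ((i:ℝ) + j))) ≤
          Real.exp (-(2 * a * |(i : ℝ) - (j : ℝ)|)) := hmono _ _ habs
      calc ‖(1 / 2 : ℂ) * (v (i - j).natAbs - v (i + j).natAbs)‖
          = (1 / 2) * ‖v (i - j).natAbs - v (i + j).natAbs‖ := by rw [norm_mul]; norm_num
        _ ≤ (1 / 2) * (‖v (i - j).natAbs‖ + ‖v (i + j).natAbs‖) := by
            nlinarith [norm_sub_le (v (i - j).natAbs) (v (i + j).natAbs)]
        _ ≤ 3 / 2 * CV * Real.exp (-(2 * a * |(i : ℝ) - (j : ℝ)|)) := by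
            nlinarith [Real.exp_pos (-(2 * a * |(i : ℝ) - (j : ℝ)|)),
              mul_le_mul_of_nonneg_left hmono2 hCV]
  -- difference formula
  have hdiff : ∀ i j : ℤ, 1 ≤ i → 1 ≤ j → ∀ t : ℕ, 1 ≤ t →
      p (i + t) (j + t) - pinf i j = -(1 / 2 : ℂ) * v (i + j + 2 * t).natAbs := by
    intro i j hi hj t ht
    have ht' : (1:ℤ) ≤ (t:ℤ) := by exact_mod_cast ht
    rw [hp (i + t) (j + t) (by linarith) (by linarith), hpinf i j hi hj]
    by_cases h : i = j
    · subst h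
      rw [if_pos rfl, if_pos rfl, show (2 * ((i:ℤ) + t)) = i + i + 2 * t by ring]
      ring
    · have h2 : i + (t:ℤ) ≠ j + t := by omega
      simp only [if_neg h2, if_neg h]
      rw [show ((i + (t:ℤ)) - (j + t)) = i - j by ring,
          show ((i + (t:ℤ)) + (j + t)) = i + j + 2 * t by ring]
      ring
  -- key scalar inequality
  have hte : ∀ t : ℕ, 1 ≤ t → (t:ℝ) * Real.exp (-(4 * a * t)) ≤ 1 / (4 * a * Real.exp 1) := by
    intro t ht
    have ht0 : (0:ℝ) < (t:ℝ) := by exact_mod_cast Nat.pos_of_ne_zero (by omega)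
    have h1 := Real.add_one_le_exp (4 * a * (t:ℝ) - 1)
    have h2 : Real.exp (4 * a * (t:ℝ) - 1) = Real.exp (4 * a * t) / Real.exp 1 := by
      rw [Real.exp_sub]
    have he1 : (0:ℝ) < Real.exp 1 := Real.exp_pos 1
    have hE : (0:ℝ) < Real.exp (4 * a * (t:ℝ)) := Real.exp_pos _
    have h3 : 4 * a * (t:ℝ) * Real.exp 1 ≤ Real.exp (4 * a * t) := by
      rw [h2] at h1
      rw [le_div_iff₀ he1] at h1
      nlinarith
    rw [show (-(4 * a * (t:ℝ))) = -(4 * a * t) by ring, Real.exp_neg, ← div_eq_mul_inv,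
      div_le_div_iff₀ hE (by positivity)]
    nlinarith
  set M : ℝ := max 1 (1 / (4 * a * Real.exp 1)) with hM
  have hM1 : (1:ℝ) ≤ M := le_max_left _ _
  have hM2 : 1 / (4 * a * Real.exp 1) ≤ M := le_max_right _ _
  -- (3)
  have h3 : ∀ i j : ℤ, 1 ≤ i → 1 ≤ j → ∀ t : ℕ, 1 ≤ t →
      ‖p (i + t) (j + t) - pinf i j‖ ≤
        CV / t * M * Real.exp (-(2 * a * |(i : ℝ) - (j : ℝ)|)) := by
    intro i j hi hj t ht
    have ht0 : (0:ℝ) < (t:ℝ) := by exact_mod_cast Nat.pos_of_ne_zero (by omega)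
    rw [hdiff i j hi hj t ht]
    have hi' : (1:ℝ) ≤ (i:ℝ) := by exact_mod_cast hi
    have hj' : (1:ℝ) ≤ (j:ℝ) := by exact_mod_cast hj
    have hn := hkey (i + j + 2 * t)
    have habs : |((i + j + 2 * t : ℤ) : ℝ)| = (i:ℝ) + j + 2 * t := by
      rw [abs_of_pos] <;> push_cast <;> [ring; linarith [ht0]]
    rw [habs] at hn
    have hD : |(i : ℝ) - (j : ℝ)| + 2 * t ≤ (i:ℝ) + j + 2 * t := by
      have : |(i : ℝ) - (j : ℝ)| ≤ (i:ℝ) + j := by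
        rw [abs_sub_le_iff]; constructor <;> linarith
      linarith
    have hm2 : Real.exp (-(2 * a * ((i:ℝ) + j + 2 * t))) ≤
        Real.exp (-(2 * a * (|(i : ℝ) - (j : ℝ)| + 2 * t))) := hmono _ _ hD
    have hsplit : Real.exp (-(2 * a * (|(i : ℝ) - (j : ℝ)| + 2 * t))) =
        Real.exp (-(2 * a * |(i : ℝ) - (j : ℝ)|)) * Real.exp (-(4 * a * t)) := by
      rw [← Real.exp_add]; ring_nf
    have hnorm : ‖-(1 / 2 : ℂ) * v (i + j + 2 * t).natAbs‖
        = (1 / 2) * ‖v (i + j + 2 * t).natAbs‖ := by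
      rw [norm_mul]; norm_num
    rw [hnorm]
    have hEpos : (0:ℝ) < Real.exp (-(2 * a * |(i : ℝ) - (j : ℝ)|)) := Real.exp_pos _
    have hexp4 : (0:ℝ) < Real.exp (-(4 * a * (t:ℝ))) := Real.exp_pos _
    have hstep : (1/2) * Real.exp (-(4 * a * (t:ℝ))) ≤ M / t := by
      have := hte t ht
      rw [le_div_iff₀ ht0]
      nlinarith
    calc (1 / 2) * ‖v (i + j + 2 * t).natAbs‖
        ≤ (1 / 2) * (CV * Real.exp (-(2 * a * ((i:ℝ) + j + 2 * t)))) := by nlinarith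
      _ ≤ (1 / 2) * (CV * (Real.exp (-(2 * a * |(i : ℝ) - (j : ℝ)|)) *
            Real.exp (-(4 * a * t)))) := by
          rw [← hsplit]
          nlinarith [hmono _ _ hD]
      _ = CV * Real.exp (-(2 * a * |(i : ℝ) - (j : ℝ)|)) *
            ((1/2) * Real.exp (-(4 * a * (t:ℝ)))) := by ring
      _ ≤ CV * Real.exp (-(2 * a * |(i : ℝ) - (j : ℝ)|)) * (M / t) := by
          nlinarith [mul_nonneg hCV hEpos.le]
      _ = CV / t * M * Real.exp (-(2 * a * |(i : ℝ) - (j : ℝ)|)) := by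
          field_simp
  refine ⟨h1, ?_, h3⟩
  -- (2)
  intro i j hi hj
  rw [← tendsto_sub_nhds_zero_iff]
  refine squeeze_zero_norm' ?_
    (tendsto_const_div_atTop_nhds_zero_nat (CV * M * Real.exp (-(2 * a * |(i : ℝ) - (j : ℝ)|))))
  filter_upwards [eventually_ge_atTop 1] with t ht
  calc ‖p (i + t) (j + t) - pinf i j‖
      ≤ CV / t * M * Real.exp (-(2 * a * |(i : ℝ) - (j : ℝ)|)) := h3 i j hi hj t ht
    _ = (CV * M * Real.exp (-(2 * a * |(i : ℝ) - (j : ℝ)|))) / t := by ring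
end

section
/- Let n ≥ 1 be an integer, ω ∈ ℝⁿ, λ ∈ ℝ, γ > 0, Δ : [0,∞) → [1,∞), K > 0, and 0 < σ < r. Suppose |k·ω + λ| ≥ γ/Δ(|k|₁) for every k ∈ ℤⁿ with |k|₁ ≤ K. Let (R_k)_{k∈ℤⁿ, |k|₁≤K} be complex numbers and define the trigonometric polynomials R(θ) = ∑_{|k|₁≤K} R_k e^{i k·θ} and F(θ) = ∑_{|k|₁≤K} (R_k / (i(k·ω + λ))) e^{i k·θ} on ℝⁿ. Then: (1) ∑_{b=1}^n ω_b (∂F/∂θ_b)(θ) + i λ F(θ) = R(θ) for every θ ∈ ℝⁿ; and (2) ∑_{|k|₁≤K} (|R_k|/|k·ω + λ|) e^{|k|₁(r−σ)} ≤ γ^{−1} (sup_{t≥0} Δ(t) e^{−tσ}) ∑_{|k|₁≤K} |R_k| e^{|k|₁ r}, provided the supremum is finite. -/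
open Real Complex

/-!
Every mode `e_k(θ) = e^{i k·θ}` satisfies `ω·∇e_k + iλe_k = i(k·ω + λ) e_k`, so dividing
the coefficients of `R` by `i(k·ω + λ)` solves the equation; where that divisor vanishes,
the small-divisor bound forces `R_k = 0`, so the junk value `R_k / 0 = 0` does no harm.
All series are finite sums over the box `[-⌈K⌉, ⌈K⌉]ⁿ`. The estimate holds term by term:
`|k·ω + λ|⁻¹ ≤ Δ(|k|₁)/γ`, and `e^{|k|₁(r-σ)} = e^{|k|₁ r} e^{-|k|₁ σ}` with
`Δ(t) e^{-tσ} ≤ Γ`.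
-/

section
variable {ι : Type*} [Fintype ι] [DecidableEq ι]

theorem mem_Icc_ceil_of_sum_abs_le {k : ι → ℤ} {K : ℝ} (hk : ∑ i, |(k i : ℝ)| ≤ K) :
    k ∈ Finset.Icc (fun _ => -⌈K⌉) (fun _ => ⌈K⌉) := by
  have hki : ∀ i, |k i| ≤ ⌈K⌉ := fun i => by
    have hle : |(k i : ℝ)| ≤ K :=
      (Finset.single_le_sum (fun j _ => abs_nonneg (k j : ℝ)) (Finset.mem_univ i)).trans hk
    exact_mod_cast hle.trans (Int.le_ceil K)
  exact Finset.mem_Icc.mpr ⟨fun i => neg_le_of_abs_le (hki i), fun i => le_of_abs_le (hki i)⟩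

theorem tsum_eq_sum_Icc_ceil {M : Type*} [AddCommMonoid M] [TopologicalSpace M]
    {f : (ι → ℤ) → M} {K : ℝ} (hf : ∀ k, K < ∑ i, |(k i : ℝ)| → f k = 0) :
    ∑' k, f k = ∑ k ∈ Finset.Icc (fun _ => -⌈K⌉) (fun _ => ⌈K⌉), f k :=
  tsum_eq_sum fun k hk => hf k (lt_of_not_ge fun hkK => hk (mem_Icc_ceil_of_sum_abs_le hkK))

theorem hasDerivAt_cexp_update (k : ι → ℤ) (θ : ι → ℝ) (b : ι) :
    HasDerivAt
      (fun s : ℝ => cexp (I * ((∑ i, (k i : ℝ) * Function.update θ b s i : ℝ) : ℂ)))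
      (I * (k b : ℂ) * cexp (I * ((∑ i, (k i : ℝ) * θ i : ℝ) : ℂ))) (θ b) := by
  have hphase : HasDerivAt (fun s : ℝ => ∑ i, (k i : ℝ) * Function.update θ b s i)
      (k b : ℝ) (θ b) := by
    have := HasDerivAt.fun_sum (u := Finset.univ) fun i _ =>
      ((hasDerivAt_pi.mp (hasDerivAt_update θ b (θ b))) i).const_mul (k i : ℝ)
    simpa [Pi.single_apply] using this
  have := (hphase.ofReal_comp.const_mul I).cexp
  simpa [mul_comm, mul_left_comm, mul_assoc] using this

theorem sum_mul_deriv_update_trigPoly (T : Finset (ι → ℤ)) (c : (ι → ℤ) → ℂ)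
    (ω θ : ι → ℝ) :
    ∑ b, (ω b : ℂ) * deriv (fun s : ℝ => ∑ k ∈ T,
        c k * cexp (I * ((∑ i, (k i : ℝ) * Function.update θ b s i : ℝ) : ℂ))) (θ b) =
      ∑ k ∈ T, c k * (I * ((∑ i, (k i : ℝ) * ω i : ℝ) : ℂ)) *
        cexp (I * ((∑ i, (k i : ℝ) * θ i : ℝ) : ℂ)) := by
  set e : (ι → ℤ) → ℂ := fun k => cexp (I * ((∑ i, (k i : ℝ) * θ i : ℝ) : ℂ))
  have hderiv : ∀ b, deriv (fun s : ℝ => ∑ k ∈ T,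
      c k * cexp (I * ((∑ i, (k i : ℝ) * Function.update θ b s i : ℝ) : ℂ))) (θ b) =
      ∑ k ∈ T, c k * (I * (k b : ℂ) * e k) :=
    fun b => (HasDerivAt.fun_sum fun k _ => (hasDerivAt_cexp_update k θ b).const_mul (c k)).deriv
  simp_rw [hderiv, Finset.mul_sum]
  rw [Finset.sum_comm]
  refine Finset.sum_congr rfl fun k _ => ?_
  rw [ofReal_sum, Finset.mul_sum, Finset.mul_sum, Finset.sum_mul]
  exact Finset.sum_congr rfl fun b _ => by rw [ofReal_mul, ofReal_intCast]; ring

end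

theorem div_abs_mul_exp_le {a d γ Δ Γ t r σ : ℝ} (ha : 0 ≤ a) (hγ : 0 < γ) (hΔ : 0 < Δ)
    (hsd : γ / Δ ≤ |d|) (hΓ : Δ * Real.exp (-(t * σ)) ≤ Γ) :
    a / |d| * Real.exp (t * (r - σ)) ≤ γ⁻¹ * Γ * (a * Real.exp (t * r)) := by
  have hinv : |d|⁻¹ ≤ Δ / γ := by
    simpa only [inv_div] using inv_anti₀ (div_pos hγ hΔ) hsd
  calc a / |d| * Real.exp (t * (r - σ))
        = a * |d|⁻¹ * (Real.exp (t * r) * Real.exp (-(t * σ))) := by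
        rw [div_eq_mul_inv, ← Real.exp_add, ← mul_neg, ← mul_add, ← sub_eq_add_neg]
    _ ≤ a * (Δ / γ) * (Real.exp (t * r) * Real.exp (-(t * σ))) := by gcongr
    _ = γ⁻¹ * (Δ * Real.exp (-(t * σ))) * (a * Real.exp (t * r)) := by ring
    _ ≤ γ⁻¹ * Γ * (a * Real.exp (t * r)) := by gcongr

theorem homological_equation_solution_general (n : ℕ)
    (ω : Fin n → ℝ) (lam γ K σ r : ℝ) (hγ : 0 < γ)
    (Δ : ℝ → ℝ) (hΔ1 : ∀ t, 0 ≤ t → 1 ≤ Δ t)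
    (hsd : ∀ k : Fin n → ℤ, (∑ i, |(k i : ℝ)|) ≤ K →
      γ / Δ (∑ i, |(k i : ℝ)|) ≤ |(∑ i, (k i : ℝ) * ω i) + lam|)
    (R : (Fin n → ℤ) → ℂ)
    (hRsupp : ∀ k : Fin n → ℤ, K < (∑ i, |(k i : ℝ)|) → R k = 0)
    (Rfun Ffun : (Fin n → ℝ) → ℂ)
    (hRfun : ∀ θ : Fin n → ℝ, Rfun θ =
      ∑' k : Fin n → ℤ, R k * Complex.exp (Complex.I * ((∑ i, (k i : ℝ) * θ i : ℝ) : ℂ)))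
    (hFfun : ∀ θ : Fin n → ℝ, Ffun θ =
      ∑' k : Fin n → ℤ,
        R k / (Complex.I * (((∑ i, (k i : ℝ) * ω i) + lam : ℝ) : ℂ)) *
          Complex.exp (Complex.I * ((∑ i, (k i : ℝ) * θ i : ℝ) : ℂ)))
    (Γ : ℝ) (hΓ : ∀ t, 0 ≤ t → Δ t * Real.exp (-(t * σ)) ≤ Γ) :
    (∀ θ : Fin n → ℝ,
      (∑ b, (ω b : ℂ) * deriv (fun s : ℝ => Ffun (Function.update θ b s)) (θ b)) +
          Complex.I * (lam : ℂ) * Ffun θ = Rfun θ) ∧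
    (∑' k : Fin n → ℤ,
        ‖R k‖ / |(∑ i, (k i : ℝ) * ω i) + lam| *
          Real.exp ((∑ i, |(k i : ℝ)|) * (r - σ))) ≤
      γ⁻¹ * Γ * ∑' k : Fin n → ℤ, ‖R k‖ * Real.exp ((∑ i, |(k i : ℝ)|) * r) := by
  have hΔpos : ∀ k : Fin n → ℤ, 0 < Δ (∑ i, |(k i : ℝ)|) := fun k =>
    one_pos.trans_le (hΔ1 _ (Finset.sum_nonneg fun i _ => abs_nonneg _))
  have hdivisor : ∀ k, (∑ i, (k i : ℝ) * ω i) + lam = 0 → R k = 0 := fun k hk =>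
    hRsupp k <| lt_of_not_ge fun hkK =>
      (div_pos hγ (hΔpos k)).not_ge (by simpa [hk] using hsd k hkK)
  refine ⟨fun θ => ?_, ?_⟩
  · have hF : ∀ ϑ, Ffun ϑ = _ := fun ϑ =>
      (hFfun ϑ).trans (tsum_eq_sum_Icc_ceil fun k hk => by rw [hRsupp k hk, zero_div, zero_mul])
    have hR : Rfun θ = _ :=
      (hRfun θ).trans (tsum_eq_sum_Icc_ceil fun k hk => by rw [hRsupp k hk, zero_mul])
    simp_rw [hF, hR, sum_mul_deriv_update_trigPoly, Finset.mul_sum, ← Finset.sum_add_distrib]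
    refine Finset.sum_congr rfl fun k _ => ?_
    have hcancel : R k / (I * (((∑ i, (k i : ℝ) * ω i) + lam : ℝ) : ℂ)) *
        (I * (((∑ i, (k i : ℝ) * ω i) + lam : ℝ) : ℂ)) = R k :=
      div_mul_cancel_of_imp fun h =>
        hdivisor k (by exact_mod_cast (mul_eq_zero.mp h).resolve_left I_ne_zero)
    rw [ofReal_add] at hcancel ⊢
    linear_combination cexp (I * ((∑ i, (k i : ℝ) * θ i : ℝ) : ℂ)) * hcancel
  · rw [tsum_eq_sum_Icc_ceil fun k hk => by rw [hRsupp k hk, norm_zero, zero_div, zero_mul],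
      tsum_eq_sum_Icc_ceil fun k hk => by rw [hRsupp k hk, norm_zero, zero_mul], Finset.mul_sum]
    refine Finset.sum_le_sum fun k _ => ?_
    by_cases hkK : ∑ i, |(k i : ℝ)| ≤ K
    · exact div_abs_mul_exp_le (norm_nonneg _) hγ (hΔpos k) (hsd k hkK)
        (hΓ _ (Finset.sum_nonneg fun i _ => abs_nonneg _))
    · simp [hRsupp k (lt_of_not_ge hkK)]

/-- The scalar homological equation `ω·∇F + iλF = R` for trigonometric polynomials
`R(θ) = ∑_{|k|₁ ≤ K} R_k e^{i k·θ}` under the Brjuno–Rüssmann small-divisor bound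
`|k·ω + λ| ≥ γ/Δ(|k|₁)`: the function
`F(θ) = ∑_{|k|₁ ≤ K} (R_k / (i(k·ω + λ))) e^{i k·θ}` solves the equation, and its
weighted Fourier norm on a strip of width `r - σ` is controlled by
`γ⁻¹ (sup_{t ≥ 0} Δ(t) e^{-tσ})` times the weighted norm of `R` on a strip of width `r`. -/
theorem homological_equation_solution (n : ℕ) (hn : 1 ≤ n)
    (ω : Fin n → ℝ) (lam γ K σ r : ℝ) (hγ : 0 < γ) (hK : 0 < K)
    (hσ : 0 < σ) (hσr : σ < r)
    (Δ : ℝ → ℝ) (hΔ1 : ∀ t, 0 ≤ t → 1 ≤ Δ t)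
    (hsd : ∀ k : Fin n → ℤ, (∑ i, |(k i : ℝ)|) ≤ K →
      γ / Δ (∑ i, |(k i : ℝ)|) ≤ |(∑ i, (k i : ℝ) * ω i) + lam|)
    (R : (Fin n → ℤ) → ℂ)
    (hRsupp : ∀ k : Fin n → ℤ, K < (∑ i, |(k i : ℝ)|) → R k = 0)
    (Rfun Ffun : (Fin n → ℝ) → ℂ)
    (hRfun : ∀ θ : Fin n → ℝ, Rfun θ =
      ∑' k : Fin n → ℤ, R k * Complex.exp (Complex.I * ((∑ i, (k i : ℝ) * θ i : ℝ) : ℂ)))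
    (hFfun : ∀ θ : Fin n → ℝ, Ffun θ =
      ∑' k : Fin n → ℤ,
        R k / (Complex.I * (((∑ i, (k i : ℝ) * ω i) + lam : ℝ) : ℂ)) *
          Complex.exp (Complex.I * ((∑ i, (k i : ℝ) * θ i : ℝ) : ℂ)))
    (Γ : ℝ) (hΓ : ∀ t, 0 ≤ t → Δ t * Real.exp (-(t * σ)) ≤ Γ) :
    (∀ θ : Fin n → ℝ,
      (∑ b, (ω b : ℂ) * deriv (fun s : ℝ => Ffun (Function.update θ b s)) (θ b)) +
          Complex.I * (lam : ℂ) * Ffun θ = Rfun θ) ∧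
    (∑' k : Fin n → ℤ,
        ‖R k‖ / |(∑ i, (k i : ℝ) * ω i) + lam| *
          Real.exp ((∑ i, |(k i : ℝ)|) * (r - σ))) ≤
      γ⁻¹ * Γ * ∑' k : Fin n → ℤ, ‖R k‖ * Real.exp ((∑ i, |(k i : ℝ)|) * r) :=
  homological_equation_solution_general n ω lam γ K σ r hγ Δ hΔ1 hsd R hRsupp Rfun Ffun hRfun hFfun
    Γ hΓ
end
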